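/- arXiv:2210.09931 — 8 statements merged into one kernel-verified Lean document; each statement's English description precedes it below -/
import Mathlib

section
/- Let d, m be natural numbers with m ≥ 1 and let L ⊆ ℤ^d be the lattice spanned by a finite sequence of vectors in {−m,…,m}^d. Then L admits a representation γ = ((n₁,a₁),…,(n_d,a_d)) satisfying ‖γ‖∞ ≤ (d!)²·m^d. -/
open scoped BigOperators
open scoped Matrix

def dotZ {d : ℕ} (a x : Fin d → ℤ) : ℤ := ∑ i, a i * x i

namespace LatticeRep

variable {d : ℕ}

/-- coordinatewise cast `ℤ^d → ℚ^d` as a `ℤ`-linear map. -/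
def castQ (d : ℕ) : (Fin d → ℤ) →ₗ[ℤ] (Fin d → ℚ) where
  toFun x i := (x i : ℚ)
  map_add' x y := by funext i; simp
  map_smul' z x := by
    funext i
    simp only [RingHom.id_apply, Pi.smul_apply, smul_eq_mul, zsmul_eq_mul]
    push_cast
    ring

@[simp] lemma castQ_apply (x : Fin d → ℤ) (i : Fin d) : castQ d x i = (x i : ℚ) := rfl

lemma castQ_injective : Function.Injective (castQ d) := by
  intro x y h
  funext i
  have := congrFun h i
  simpa using this

lemma li_cast {n : ℕ} {w : Fin n → Fin d → ℤ} (h : LinearIndependent ℤ w) :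
    LinearIndependent ℚ (fun i => castQ d (w i)) := by
  have h1 : LinearIndependent ℤ (castQ d ∘ w) :=
    h.map' (castQ d) (LinearMap.ker_eq_bot.mpr castQ_injective)
  exact h1.localization ℚ (nonZeroDivisors ℤ)

lemma exists_rows (r : ℕ) (u : Fin r → Fin d → ℚ) (hu : LinearIndependent ℚ u) :
    ∃ ρ : Fin r → Fin d, Function.Injective ρ ∧
      (Matrix.of fun t s => u s (ρ t)).det ≠ 0 := by
  classical
  set A : Matrix (Fin d) (Fin r) ℚ := Matrix.of fun i s => u s i with hA
  -- the rows of A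
  set g : Fin d → Fin r → ℚ := fun i s => u s i with hg
  have hmulVec : ∀ q : Fin r → ℚ, A.mulVec q = fun i => ∑ s, q s * u s i := by
    intro q
    funext i
    simp [Matrix.mulVec, dotProduct, hA, hg, mul_comm]
  have hinj : Function.Injective A.mulVecLin := by
    rw [← LinearMap.ker_eq_bot, LinearMap.ker_eq_bot']
    intro q hq
    rw [Matrix.mulVecLin_apply, hmulVec] at hq
    have := Fintype.linearIndependent_iff.mp hu q ?_
    · funext s; exact this s
    · funext i
      simpa using congrFun hq i
  have hrankA : A.rank = r := by
    rw [Matrix.rank, LinearMap.finrank_range_of_inj hinj]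
    simp
  have hspan : Module.finrank ℚ (Submodule.span ℚ (Set.range g)) = r := by
    have h1 : Aᵀ.rank = r := by rw [Matrix.rank_transpose]; exact hrankA
    rw [Matrix.rank_eq_finrank_span_cols] at h1; exact h1
  obtain ⟨b, hb_sub, hb_span, hb_li⟩ := exists_linearIndependent ℚ (Set.range g)
  haveI : Fintype b := ((Set.finite_range g).subset hb_sub).fintype
  have hcard : Fintype.card b = r := by
    have h1 : Module.finrank ℚ (Submodule.span ℚ b) = b.toFinset.card :=
      finrank_span_set_eq_card hb_li
    rw [hb_span, hspan] at h1
    rw [Set.toFinset_card] at h1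
    omega
  set e : Fin r ≃ b := (Fintype.equivFinOfCardEq hcard).symm with he
  have hsel : ∀ x : b, ∃ i : Fin d, g i = (x : Fin r → ℚ) := fun x => hb_sub x.2
  choose ρ0 hρ0 using hsel
  refine ⟨fun t => ρ0 (e t), ?_, ?_⟩
  · intro t₁ t₂ h12
    simp only [] at h12
    have : g (ρ0 (e t₁)) = g (ρ0 (e t₂)) := by rw [h12]
    rw [hρ0, hρ0] at this
    exact e.injective (Subtype.coe_injective this)
  · intro hdet
    set M : Matrix (Fin r) (Fin r) ℚ := Matrix.of fun t s => u s (ρ0 (e t)) with hM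
    have hdetT : Mᵀ.det = 0 := by rw [Matrix.det_transpose]; exact hdet
    obtain ⟨q, hq0, hq⟩ := (Matrix.exists_mulVec_eq_zero_iff).mpr hdetT
    have hli : LinearIndependent ℚ (fun t : Fin r => g (ρ0 (e t))) := by
      have h1 : LinearIndependent ℚ (fun x : b => (x : Fin r → ℚ)) := hb_li
      have h2 := h1.comp e e.injective
      convert h2 using 1
      funext t
      simp [Function.comp, hρ0]
    have := Fintype.linearIndependent_iff.mp hli q ?_
    · exact hq0 (funext fun s => this s)
    · funext s
      have := congrFun hq s
      simpa [Matrix.mulVec, dotProduct, hM, Finset.sum_apply, mul_comm] using this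
  


variable {d r : ℕ} {R : Type*} [CommRing R]

/-- the extended row selection -/
def rho' (ρ : Fin r → Fin d) (l : Fin d) : Fin (r + 1) → Fin d := Fin.snoc ρ l

@[simp] lemma rho'_castSucc (ρ : Fin r → Fin d) (l : Fin d) (t : Fin r) :
    rho' ρ l t.castSucc = ρ t := by simp [rho']

@[simp] lemma rho'_last (ρ : Fin r → Fin d) (l : Fin d) :
    rho' ρ l (Fin.last r) = l := by simp [rho']

/-- The `(r+1) × (r+1)` matrix whose first `r` rows are the vectors `c t` restricted to the
coordinates `ρ 0, …, ρ (r-1), l`, and whose last row is `y` restricted to those coordinates. -/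
def cmat (c : Fin r → Fin d → R) (ρ : Fin r → Fin d) (l : Fin d) (y : Fin d → R) :
    Matrix (Fin (r + 1)) (Fin (r + 1)) R :=
  Matrix.of (Fin.snoc (fun (t : Fin r) => fun (u : Fin (r + 1)) => c t (rho' ρ l u))
    (fun (u : Fin (r + 1)) => y (rho' ρ l u)))

lemma cmat_castSucc (c : Fin r → Fin d → R) (ρ : Fin r → Fin d) (l : Fin d) (y : Fin d → R)
    (t : Fin r) : cmat c ρ l y t.castSucc = fun u => c t (rho' ρ l u) := by
  show (Fin.snoc (α := fun _ : Fin (r+1) => Fin (r+1) → R)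
    (fun (t : Fin r) (u : Fin (r+1)) => c t (rho' ρ l u))
    (fun (u : Fin (r+1)) => y (rho' ρ l u))) t.castSucc = _
  rw [Fin.snoc_castSucc]

lemma cmat_last (c : Fin r → Fin d → R) (ρ : Fin r → Fin d) (l : Fin d) (y : Fin d → R) :
    cmat c ρ l y (Fin.last r) = fun u => y (rho' ρ l u) := by
  show (Fin.snoc (α := fun _ : Fin (r+1) => Fin (r+1) → R)
    (fun (t : Fin r) (u : Fin (r+1)) => c t (rho' ρ l u))
    (fun (u : Fin (r+1)) => y (rho' ρ l u))) (Fin.last r) = _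
  rw [Fin.snoc_last]

lemma cmat_eq_updateRow (c : Fin r → Fin d → R) (ρ : Fin r → Fin d) (l : Fin d)
    (y z : Fin d → R) :
    cmat c ρ l y = (cmat c ρ l z).updateRow (Fin.last r) (fun u => y (rho' ρ l u)) := by
  ext s u
  induction s using Fin.lastCases with
  | last => rw [Matrix.updateRow_self, cmat_last]
  | cast t =>
      rw [Matrix.updateRow_ne (Fin.castSucc_lt_last t).ne, cmat_castSucc, cmat_castSucc]

/-- `y ↦ det (cmat c ρ l y)` as a linear map. -/
def cmatLin (c : Fin r → Fin d → R) (ρ : Fin r → Fin d) (l : Fin d) :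
    (Fin d → R) →ₗ[R] R where
  toFun y := (cmat c ρ l y).det
  map_add' y z := by
    show (cmat c ρ l (y + z)).det = (cmat c ρ l y).det + (cmat c ρ l z).det
    rw [cmat_eq_updateRow c ρ l (y + z) 0, cmat_eq_updateRow c ρ l y 0,
      cmat_eq_updateRow c ρ l z 0]
    have h : (fun u => (y + z) (rho' ρ l u)) =
        (fun u => y (rho' ρ l u)) + fun u => z (rho' ρ l u) := rfl
    rw [h, Matrix.det_updateRow_add]
  map_smul' a y := by
    show (cmat c ρ l (a • y)).det = a • (cmat c ρ l y).det
    rw [cmat_eq_updateRow c ρ l (a • y) 0, cmat_eq_updateRow c ρ l y 0]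
    have h : (fun u => (a • y) (rho' ρ l u)) = a • fun u => y (rho' ρ l u) := rfl
    rw [h, Matrix.det_updateRow_smul, smul_eq_mul]

@[simp] lemma cmatLin_apply (c : Fin r → Fin d → R) (ρ : Fin r → Fin d) (l : Fin d)
    (y : Fin d → R) : cmatLin c ρ l y = (cmat c ρ l y).det := rfl

lemma cmat_det_eq_dot (c : Fin r → Fin d → R) (ρ : Fin r → Fin d) (l : Fin d) (y : Fin d → R) :
    (cmat c ρ l y).det = ∑ q, (cmat c ρ l (Pi.single q 1)).det * y q := by
  have hy : y = ∑ q, y q • (Pi.single q (1 : R) : Fin d → R) := by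
    funext i
    simp [Finset.sum_apply, Pi.single_apply]
  calc (cmat c ρ l y).det = cmatLin c ρ l y := rfl
    _ = cmatLin c ρ l (∑ q, y q • (Pi.single q (1 : R) : Fin d → R)) := by rw [← hy]
    _ = ∑ q, y q * cmatLin c ρ l (Pi.single q 1) := by
        rw [map_sum]
        exact Finset.sum_congr rfl fun q _ => by rw [map_smul, smul_eq_mul]
    _ = ∑ q, (cmat c ρ l (Pi.single q 1)).det * y q := by
        exact Finset.sum_congr rfl fun q _ => by rw [cmatLin_apply, mul_comm]

lemma cmat_det_gen_zero (c : Fin r → Fin d → R) (ρ : Fin r → Fin d) (l : Fin d) (t : Fin r) :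
    (cmat c ρ l (c t)).det = 0 := by
  apply Matrix.det_zero_of_row_eq (Fin.castSucc_lt_last t).ne
  rw [cmat_castSucc, cmat_last]

/-- cast of `cmat` along a ring hom. -/
lemma cmat_map {S : Type*} [CommRing S] (f : R →+* S) (c : Fin r → Fin d → R)
    (ρ : Fin r → Fin d) (l : Fin d) (y : Fin d → R) :
    (cmat c ρ l y).map f = cmat (fun t i => f (c t i)) ρ l (fun i => f (y i)) := by
  ext s u
  induction s using Fin.lastCases with
  | last =>
      rw [Matrix.map_apply]
      rw [congrFun (cmat_last c ρ l y) u,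
        congrFun (cmat_last (fun t i => f (c t i)) ρ l (fun i => f (y i))) u]
  | cast t =>
      rw [Matrix.map_apply]
      rw [congrFun (cmat_castSucc c ρ l y t) u,
        congrFun (cmat_castSucc (fun t i => f (c t i)) ρ l (fun i => f (y i)) t) u]

/-- Expansion when `y` vanishes on the selected rows. -/
lemma cmat_det_single (c : Fin r → Fin d → R) (ρ : Fin r → Fin d) (l : Fin d) (z : Fin d → R)
    (hz : ∀ t, z (ρ t) = 0) :
    (cmat c ρ l z).det = z l * (Matrix.of fun t s => c s (ρ t)).det := by
  classical
  have hrow : (fun u => z (rho' ρ l u)) = z l • (Pi.single (Fin.last r) (1 : R) : Fin (r+1) → R) := by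
    funext u
    induction u using Fin.lastCases with
    | last => simp
    | cast t =>
        rw [rho'_castSucc, hz t, Pi.smul_apply,
          Pi.single_eq_of_ne (Fin.castSucc_lt_last t).ne, smul_zero]
  rw [cmat_eq_updateRow c ρ l z z, hrow, Matrix.det_updateRow_smul]
  congr 1
  -- now the matrix has last row `Pi.single (last) 1`; expand along the last row
  set M := (cmat c ρ l z).updateRow (Fin.last r)
    ((Pi.single (Fin.last r) (1 : R) : Fin (r+1) → R)) with hM
  have hexp := Matrix.det_succ_row M (Fin.last r)
  have hMlast : ∀ u, M (Fin.last r) u = (Pi.single (Fin.last r) (1 : R) : Fin (r+1) → R) u :=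
    fun u => by rw [hM, Matrix.updateRow_self]
  rw [hexp, Finset.sum_eq_single (Fin.last r)]
  · rw [hMlast, Pi.single_eq_same, mul_one]
    have h1 : ((-1 : R)) ^ ((Fin.last r : ℕ) + (Fin.last r : ℕ)) = 1 := by
      rw [Fin.val_last]
      exact Even.neg_one_pow ⟨r, by ring⟩
    rw [h1, one_mul]
    have h2 : M.submatrix (Fin.last r).succAbove (Fin.last r).succAbove =
        (Matrix.of fun t s => c s (ρ t))ᵀ := by
      ext t s
      rw [Matrix.submatrix_apply]
      simp only [Fin.succAbove_last]
      rw [hM, Matrix.updateRow_ne (Fin.castSucc_lt_last t).ne]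
      have h3 := congrFun (cmat_castSucc c ρ l z t) s.castSucc
      rw [h3, rho'_castSucc]
      rfl
    rw [h2, Matrix.det_transpose]
  · intro u _ hu
    rw [hMlast, Pi.single_eq_of_ne hu, mul_zero, zero_mul]
  · intro h
    exact absurd (Finset.mem_univ _) h


lemma cmat_cast {r : ℕ} (c : Fin r → Fin d → ℤ) (ρ : Fin r → Fin d) (l : Fin d)
    (y : Fin d → ℤ) :
    (cmat c ρ l y).map (Int.cast : ℤ → ℚ)
      = cmat (fun t => castQ d (c t)) ρ l (castQ d y) := by
  ext s u
  induction s using Fin.lastCases with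
  | last =>
      rw [Matrix.map_apply, congrFun (cmat_last c ρ l y) u,
        congrFun (cmat_last (fun t => castQ d (c t)) ρ l (castQ d y)) u]
      rfl
  | cast t =>
      rw [Matrix.map_apply, congrFun (cmat_castSucc c ρ l y t) u,
        congrFun (cmat_castSucc (fun t => castQ d (c t)) ρ l (castQ d y) t) u]
      rfl

end LatticeRep

set_option maxHeartbeats 1000000 in
/-- Any lattice spanned by a finite sequence of vectors in
`{-m,…,m}^d` (with `m ≥ 1`) admits a representation
`γ = ((n₁,a₁),…,(n_d,a_d))` with `‖γ‖∞ ≤ (d!)² · m^d`, i.e. the lattice is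
exactly the set of `x ∈ ℤ^d` such that `aᵢ · x ∈ nᵢℤ` for every `i`. -/
theorem lattice_representation_bound (d m : ℕ) (hm : 1 ≤ m) (k : ℕ)
    (v : Fin k → Fin d → ℤ) (hv : ∀ j i, |v j i| ≤ (m : ℤ)) :
    ∃ γ : Fin d → ℕ × (Fin d → ℤ),
      (∀ x : Fin d → ℤ,
        x ∈ AddSubgroup.closure (Set.range v) ↔
          ∀ i : Fin d, ((γ i).1 : ℤ) ∣ dotZ (γ i).2 x) ∧
      (∀ i : Fin d, (γ i).1 ≤ (Nat.factorial d) ^ 2 * m ^ d) ∧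
      (∀ i l : Fin d, |(γ i).2 l| ≤ (((Nat.factorial d) ^ 2 * m ^ d : ℕ) : ℤ)) := by
  classical
  open LatticeRep in
  set L : Submodule ℤ (Fin d → ℤ) := Submodule.span ℤ (Set.range v) with hLdef
  have hclosure : ∀ x : Fin d → ℤ, x ∈ AddSubgroup.closure (Set.range v) ↔ x ∈ L := by
    intro x
    rw [← Submodule.span_int_eq_addSubgroupClosure]
    rfl
  -- rational side
  set vQ : Fin k → Fin d → ℚ := fun j => LatticeRep.castQ d (v j) with hvQdef
  obtain ⟨b, hb_sub, hb_span, hb_li⟩ := exists_linearIndependent ℚ (Set.range vQ)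
  haveI : Fintype b := ((Set.finite_range vQ).subset hb_sub).fintype
  set r : ℕ := Fintype.card b with hrdef
  set e : Fin r ≃ b := (Fintype.equivFin b).symm with hedef
  have hsel : ∀ x : b, ∃ j : Fin k, vQ j = (x : Fin d → ℚ) := fun x => hb_sub x.2
  choose jc hjc using hsel
  set c : Fin r → Fin d → ℤ := fun t => v (jc (e t)) with hcdef
  set cQ : Fin r → Fin d → ℚ := fun t => LatticeRep.castQ d (c t) with hcQdef
  have hcQe : ∀ t, cQ t = ((e t : Fin d → ℚ)) := fun t => hjc (e t)
  have hcQ_li : LinearIndependent ℚ cQ := by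
    have h1 := hb_li.comp e e.injective
    have h2 : cQ = fun t => ((e t : Fin d → ℚ)) := funext hcQe
    rw [h2]; exact h1
  have hcv : ∀ t, c t ∈ Set.range v := fun t => ⟨jc (e t), rfl⟩
  have hcm : ∀ t i, |c t i| ≤ (m : ℤ) := fun t i => hv _ i
  set W : Submodule ℚ (Fin d → ℚ) := Submodule.span ℚ (Set.range cQ) with hWdef
  have hrangecQ : Set.range cQ = b := by
    rw [funext hcQe]
    ext y
    constructor
    · rintro ⟨t, rfl⟩; exact (e t).2
    · intro hy; exact ⟨e.symm ⟨y, hy⟩, by simp⟩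
  have hWb : W = Submodule.span ℚ (Set.range vQ) := by rw [hWdef, hrangecQ, hb_span]
  have hvW : ∀ j, vQ j ∈ W := fun j => hWb ▸ Submodule.subset_span ⟨j, rfl⟩
  have hLW : ∀ x ∈ L, LatticeRep.castQ d x ∈ W := by
    intro x hx
    have h1 : L ≤ (W.restrictScalars ℤ).comap (LatticeRep.castQ d) := by
      rw [hLdef]
      apply Submodule.span_le.mpr
      rintro _ ⟨j, rfl⟩
      exact hvW j
    exact h1 hx
  -- row selection
  obtain ⟨ρ, hρinj, hdetQ⟩ := LatticeRep.exists_rows r cQ hcQ_li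
  set Mq : Matrix (Fin r) (Fin r) ℚ := Matrix.of fun t s => cQ s (ρ t) with hMqdef
  set Mz : Matrix (Fin r) (Fin r) ℤ := Matrix.of fun t s => c s (ρ t) with hMzdef
  have hMq_cast : Mq = Mz.map (Int.cast : ℤ → ℚ) := by
    ext t s
    simp [hMqdef, hMzdef, Matrix.map_apply, hcQdef]
  have hdetcast : ((Mz.det : ℤ) : ℚ) = Mq.det := by
    rw [hMq_cast]
    exact RingHom.map_det (Int.castRingHom ℚ) Mz
  have hdetMz : Mz.det ≠ 0 := by
    intro h0
    rw [h0] at hdetcast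
    simp only [Int.cast_zero] at hdetcast
    exact hdetQ hdetcast.symm
  set D : ℤ := Mz.det with hDdef
  have hrd : r ≤ d := by
    have := Fintype.card_le_of_injective ρ hρinj
    simpa using this
  have hone_le_m : (1 : ℤ) ≤ (m : ℤ) := by exact_mod_cast hm
  -- determinant bound
  have hDbound : |D| ≤ (Nat.factorial d : ℤ) * (m : ℤ) ^ d := by
    have h1 : ∀ t s, (AbsoluteValue.abs : AbsoluteValue ℤ ℤ) (Mz t s) ≤ (m : ℤ) := by
      intro t s
      simpa [hMzdef] using hcm s (ρ t)
    have h2 := Matrix.det_le h1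
    simp only [Fintype.card_fin, nsmul_eq_mul] at h2
    calc |D| ≤ (Nat.factorial r : ℤ) * (m : ℤ) ^ r := h2
      _ ≤ (Nat.factorial d : ℤ) * (m : ℤ) ^ d := by
          apply mul_le_mul
          · exact_mod_cast Nat.factorial_le hrd
          · exact pow_le_pow_right₀ hone_le_m hrd
          · positivity
          · positivity
  -- injectivity of the coordinate projection on W
  have hpinj : ∀ w ∈ W, (∀ t, w (ρ t) = 0) → w = 0 := by
    intro w hw hwρ
    obtain ⟨q, hq⟩ := (Submodule.mem_span_range_iff_exists_fun ℚ).mp hw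
    have hqv : Mq.mulVec q = 0 := by
      funext t
      have h1 : Mq.mulVec q t = w (ρ t) := by
        rw [← hq]
        simp [Matrix.mulVec, dotProduct, hMqdef, Finset.sum_apply, mul_comm]
      exact h1.trans (hwρ t)
    have hq0 : q = 0 := by
      have h2 := congrArg (fun z => Mq.adjugate.mulVec z) hqv
      simp only [Matrix.mulVec_mulVec, Matrix.adjugate_mul, Matrix.mulVec_zero] at h2
      have h3 : Mq.det • q = 0 := by
        rw [Matrix.smul_mulVec, Matrix.one_mulVec] at h2
        exact h2
      funext s
      have h4 := congrFun h3 s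
      simp only [Pi.smul_apply, smul_eq_mul, Pi.zero_apply] at h4
      rcases mul_eq_zero.mp h4 with h | h
      · exact absurd h hdetQ
      · exact h
    rw [← hq, hq0]
    simp
  -- Key Lemma 2
  have hk2 : ∀ x : Fin d → ℤ, LatticeRep.castQ d x ∈ W →
      D • x ∈ Submodule.span ℤ (Set.range c) := by
    intro x hx
    set q : Fin r → ℤ := Mz.adjugate.mulVec (fun t => x (ρ t)) with hqdef
    set y : Fin d → ℤ := ∑ s, q s • c s with hydef
    have hy_mem : y ∈ Submodule.span ℤ (Set.range c) :=
      Submodule.sum_mem _ fun s _ =>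
        Submodule.smul_mem _ _ (Submodule.subset_span ⟨s, rfl⟩)
    have hyρ : ∀ t, y (ρ t) = D * x (ρ t) := by
      intro t
      have h1 : y (ρ t) = Mz.mulVec q t := by
        simp [hydef, Matrix.mulVec, dotProduct, hMzdef, Finset.sum_apply, mul_comm]
      rw [h1, hqdef, Matrix.mulVec_mulVec, Matrix.mul_adjugate, ← hDdef,
        Matrix.smul_mulVec, Matrix.one_mulVec]
      rfl
    have hzW : LatticeRep.castQ d (D • x) - LatticeRep.castQ d y ∈ W := by
      apply Submodule.sub_mem
      · rw [map_smul]
        have := Submodule.smul_mem (W.restrictScalars ℤ) D hx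
        exact this
      · rw [hydef, map_sum]
        apply Submodule.sum_mem
        intro s _
        rw [map_smul]
        exact Submodule.smul_mem (W.restrictScalars ℤ) (q s) (Submodule.subset_span ⟨s, rfl⟩)
    have hzρ : ∀ t, (LatticeRep.castQ d (D • x) - LatticeRep.castQ d y) (ρ t) = 0 := by
      intro t
      simp only [Pi.sub_apply, LatticeRep.castQ_apply, Pi.smul_apply, smul_eq_mul]
      rw [← hyρ t]
      push_cast
      ring
    have hz0 := hpinj _ hzW hzρ
    have hxy : LatticeRep.castQ d (D • x) = LatticeRep.castQ d y := by
      rw [sub_eq_zero] at hz0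
      exact hz0
    have := LatticeRep.castQ_injective hxy
    rw [this]
    exact hy_mem
  -- Smith normal form
  obtain ⟨n, S⟩ := Submodule.smithNormalForm (Pi.basisFun ℤ (Fin d)) L
  have ha_ne : ∀ i : Fin n, S.a i ≠ 0 := by
    intro i h0
    have h1 := S.snf i
    rw [h0, zero_smul] at h1
    exact S.bN.ne_zero i (Subtype.coe_injective (h1.trans rfl))
  have hbNL : ∀ i : Fin n, ((S.bN i : Fin d → ℤ)) ∈ L := fun i => (S.bN i).2
  have hbMW : ∀ i : Fin n, LatticeRep.castQ d (S.bM (S.f i)) ∈ W := by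
    intro i
    have h1 : LatticeRep.castQ d ((S.bN i : Fin d → ℤ)) ∈ W := hLW _ (hbNL i)
    rw [S.snf i, map_smul] at h1
    have h2 : ((S.a i : ℤ) : ℚ) • LatticeRep.castQ d (S.bM (S.f i)) ∈ W := by
      rwa [← Int.cast_smul_eq_zsmul ℚ] at h1
    have h3 := Submodule.smul_mem W (((S.a i : ℤ) : ℚ))⁻¹ h2
    rwa [inv_smul_smul₀ (by exact_mod_cast ha_ne i)] at h3
  have hspanc_le : Submodule.span ℤ (Set.range c) ≤ L := by
    rw [hLdef]
    exact Submodule.span_le.mpr fun x ⟨t, ht⟩ => Submodule.subset_span (ht ▸ hcv t)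
  have hadvd : ∀ i : Fin n, S.a i ∣ D := by
    intro i
    have h2 := hk2 _ (hbMW i)
    have h4 : D • S.bM (S.f i) ∈ L := hspanc_le h2
    obtain ⟨co, hco⟩ := (S.bN.mem_submodule_iff').mp h4
    set φ : (Fin d → ℤ) →ₗ[ℤ] ℤ := S.bM.coord (S.f i) with hφ
    have hφ_self : φ (S.bM (S.f i)) = 1 := by
      rw [hφ, Module.Basis.coord_apply, Module.Basis.repr_self, Finsupp.single_eq_same]
    have hφ_bN : ∀ t, φ ((S.bN t : Fin d → ℤ)) = if t = i then S.a t else 0 := by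
      intro t
      rw [hφ, Module.Basis.coord_apply, S.snf t, map_smul, Finsupp.smul_apply, Module.Basis.repr_self,
        smul_eq_mul]
      by_cases ht : t = i
      · subst ht
        rw [Finsupp.single_eq_same, if_pos rfl, mul_one]
      · rw [Finsupp.single_eq_of_ne (fun hc => ht (S.f.injective hc.symm)), if_neg ht, mul_zero]
    have h7 : D = co i * S.a i := by
      have h8 := congrArg φ hco
      simp only [map_smul, map_sum, hφ_self, smul_eq_mul, mul_one, hφ_bN,
        mul_ite, mul_zero, Finset.sum_ite_eq', Finset.mem_univ, if_true] at h8
      exact h8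
    exact ⟨co i, by rw [h7, mul_comm]⟩
  -- n = r
  have hbN_li_Q : LinearIndependent ℚ (fun i : Fin n => LatticeRep.castQ d (S.bN i : Fin d → ℤ)) := by
    apply LatticeRep.li_cast
    exact S.bN.linearIndependent.map' L.subtype (Submodule.ker_subtype L)
  have hfinW : Module.finrank ℚ W = r := by
    rw [hWdef, finrank_span_eq_card hcQ_li, Fintype.card_fin]
  have hn_le_r : n ≤ r := by
    have h1 : LinearIndependent ℚ (fun i : Fin n =>
        (⟨LatticeRep.castQ d (S.bN i : Fin d → ℤ), hLW _ (hbNL i)⟩ : W)) := by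
      apply LinearIndependent.of_comp W.subtype
      exact hbN_li_Q
    have h2 := h1.fintype_card_le_finrank
    rwa [Fintype.card_fin, hfinW] at h2
  have hr_le_n : r ≤ n := by
    set W2 : Submodule ℚ (Fin d → ℚ) :=
      Submodule.span ℚ (Set.range fun i : Fin n => LatticeRep.castQ d (S.bN i : Fin d → ℤ))
      with hW2def
    have hcW2 : ∀ t, cQ t ∈ W2 := by
      intro t
      have h1 : c t ∈ L := hLdef ▸ Submodule.subset_span (hcv t)
      obtain ⟨co, hco⟩ := (S.bN.mem_submodule_iff').mp h1
      rw [hcQdef]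
      simp only
      rw [hco, map_sum]
      apply Submodule.sum_mem
      intro t' _
      rw [map_smul]
      exact Submodule.smul_mem (W2.restrictScalars ℤ) (co t') (Submodule.subset_span ⟨t', rfl⟩)
    have h1 : LinearIndependent ℚ (fun t : Fin r => (⟨cQ t, hcW2 t⟩ : W2)) := by
      apply LinearIndependent.of_comp W2.subtype
      exact hcQ_li
    have h2 := h1.fintype_card_le_finrank
    rw [Fintype.card_fin] at h2
    have h3 : Module.finrank ℚ W2 ≤ n := by
      have h4 := finrank_span_le_card (R := ℚ)
        (Set.range fun i : Fin n => LatticeRep.castQ d (S.bN i : Fin d → ℤ))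
      calc Module.finrank ℚ W2 ≤ (Set.range fun i : Fin n =>
            LatticeRep.castQ d (S.bN i : Fin d → ℤ)).toFinset.card := h4
        _ ≤ n := by
            rw [Set.toFinset_card]
            have := Fintype.card_range_le (fun i : Fin n => LatticeRep.castQ d (S.bN i : Fin d → ℤ))
            simpa using this
    exact le_trans h2 h3
  have hnr : n = r := le_antisymm hn_le_r hr_le_n
  -- complement equivalence
  have hcompl : Fintype.card {j : Fin d // j ∉ Set.range ⇑S.f}
      = Fintype.card {l : Fin d // l ∉ Set.range ρ} := by
    rw [Fintype.card_subtype_compl, Fintype.card_subtype_compl]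
    congr 1
    exact Fintype.card_congr ((Equiv.ofInjective _ S.f.injective).symm.trans
      ((finCongr hnr).trans (Equiv.ofInjective _ hρinj)))
  set E : {j : Fin d // j ∉ Set.range ⇑S.f} ≃ {l : Fin d // l ∉ Set.range ρ} :=
    Fintype.equivOfCardEq hcompl with hEdef
  -- coordinate vectors
  set wv : Fin n → Fin d → ℤ := fun i q => S.bM.coord (S.f i) (Pi.single q 1) with hwvdef
  have hdotwv : ∀ (i : Fin n) (x : Fin d → ℤ), dotZ (wv i) x = S.bM.repr x (S.f i) := by
    intro i x
    have hx : x = ∑ q, x q • (Pi.single q (1:ℤ) : Fin d → ℤ) := by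
      funext q'
      simp [Finset.sum_apply, Pi.single_apply]
    rw [dotZ]
    calc ∑ q, wv i q * x q
        = S.bM.coord (S.f i) (∑ q, x q • (Pi.single q (1:ℤ) : Fin d → ℤ)) := by
          rw [map_sum]
          exact Finset.sum_congr rfl fun q _ => by
            rw [map_smul, smul_eq_mul, hwvdef]; ring
      _ = S.bM.repr x (S.f i) := by rw [← hx, Module.Basis.coord_apply]
  set A : Fin n → ℕ := fun i => (S.a i).natAbs with hAdef
  have hApos : ∀ i : Fin n, (0:ℤ) < (A i : ℤ) := by
    intro i
    have h1 := Int.natAbs_pos.mpr (ha_ne i)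
    exact_mod_cast h1
  set av : Fin n → Fin d → ℤ := fun i q => wv i q % (A i : ℤ) with havdef
  have hdiffdvd : ∀ i q, (A i : ℤ) ∣ av i q - wv i q := by
    intro i q
    have h1 : av i q - wv i q = -((A i : ℤ) * (wv i q / (A i : ℤ))) := by
      rw [havdef]
      simp only
      rw [Int.emod_def]
      ring
    rw [h1]
    exact dvd_neg.mpr (Dvd.intro _ rfl)
  have hdotdiff : ∀ i x, (A i : ℤ) ∣ dotZ (av i) x - dotZ (wv i) x := by
    intro i x
    rw [dotZ, dotZ, ← Finset.sum_sub_distrib]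
    apply Finset.dvd_sum
    intro q _
    have h1 : av i q * x q - wv i q * x q = (av i q - wv i q) * x q := by ring
    rw [h1]
    exact Dvd.dvd.mul_right (hdiffdvd i q) _
  have hdvd_iff : ∀ i x, (((A i : ℕ) : ℤ) ∣ dotZ (av i) x) ↔ S.a i ∣ S.bM.repr x (S.f i) := by
    intro i x
    have h2 := dvd_iff_dvd_of_dvd_sub (hdotdiff i x)
    rw [hAdef] at h2 ⊢
    exact h2.trans (by rw [hdotwv i x]; exact Int.natAbs_dvd)
  -- vanishing of cramer forms on W
  have hWvanl : ∀ (l : Fin d), ∀ w ∈ W, (LatticeRep.cmatLin cQ ρ l) w = 0 := by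
    intro l w hw
    have hker : W ≤ LinearMap.ker (LatticeRep.cmatLin cQ ρ l) := by
      rw [hWdef]
      apply Submodule.span_le.mpr
      rintro _ ⟨t, rfl⟩
      simp only [SetLike.mem_coe, LinearMap.mem_ker, LatticeRep.cmatLin_apply]
      exact LatticeRep.cmat_det_gen_zero cQ ρ l t
    exact hker hw
  have hcast_det : ∀ (l : Fin d) (y : Fin d → ℤ),
      (((LatticeRep.cmat c ρ l y).det : ℤ) : ℚ)
        = (LatticeRep.cmat cQ ρ l (LatticeRep.castQ d y)).det := by
    intro l y
    calc (((LatticeRep.cmat c ρ l y).det : ℤ) : ℚ)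
        = (((LatticeRep.cmat c ρ l y).map (Int.cast : ℤ → ℚ))).det :=
          RingHom.map_det (Int.castRingHom ℚ) _
      _ = (LatticeRep.cmat cQ ρ l (LatticeRep.castQ d y)).det := by
          rw [LatticeRep.cmat_cast, hcQdef]
  -- Key Lemma 1
  have hk1 : ∀ x : Fin d → ℤ, (∀ l, l ∉ Set.range ρ →
      (LatticeRep.cmat c ρ l x).det = 0) → LatticeRep.castQ d x ∈ W := by
    intro x hx
    set q : Fin r → ℚ := Mq⁻¹.mulVec (fun t => ((x (ρ t) : ℤ) : ℚ)) with hqdef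
    set w : Fin d → ℚ := ∑ s, q s • cQ s with hwdef2
    have hwW : w ∈ W := Submodule.sum_mem _ fun s _ =>
      Submodule.smul_mem _ _ (Submodule.subset_span ⟨s, rfl⟩)
    have hwρ : ∀ t, w (ρ t) = ((x (ρ t) : ℤ) : ℚ) := by
      intro t
      have h1 : w (ρ t) = Mq.mulVec q t := by
        simp [hwdef2, Matrix.mulVec, dotProduct, hMqdef, Finset.sum_apply, mul_comm]
      rw [h1, hqdef, Matrix.mulVec_mulVec,
        Matrix.mul_nonsing_inv Mq (isUnit_iff_ne_zero.mpr hdetQ), Matrix.one_mulVec]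
    set z : Fin d → ℚ := LatticeRep.castQ d x - w with hzdef
    have hzρ : ∀ t, z (ρ t) = 0 := by
      intro t
      rw [hzdef]
      simp only [Pi.sub_apply, LatticeRep.castQ_apply]
      rw [hwρ t, sub_self]
    have hzl : ∀ l, z l = 0 := by
      intro l
      by_cases hl : l ∈ Set.range ρ
      · obtain ⟨t, rfl⟩ := hl
        exact hzρ t
      · have h1 : (LatticeRep.cmatLin cQ ρ l) z = 0 := by
          rw [hzdef, map_sub]
          have h2 : (LatticeRep.cmatLin cQ ρ l) (LatticeRep.castQ d x) = 0 := by
            rw [LatticeRep.cmatLin_apply, ← hcast_det l x, hx l hl, Int.cast_zero]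
          rw [h2, hWvanl l w hwW, sub_zero]
        have h3 := LatticeRep.cmat_det_single cQ ρ l z hzρ
        rw [LatticeRep.cmatLin_apply] at h1
        rw [h1] at h3
        have h4 : z l * Mq.det = 0 := by rw [hMqdef]; exact h3.symm
        rcases mul_eq_zero.mp h4 with h | h
        · exact h
        · exact absurd h hdetQ
    have hz0 : z = 0 := funext hzl
    have : LatticeRep.castQ d x = w := by
      rw [hzdef] at hz0
      exact sub_eq_zero.mp hz0
    rw [this]
    exact hwW
  -- the membership characterization
  have hmem_iff : ∀ x : Fin d → ℤ, x ∈ L ↔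
      ((∀ l : Fin d, l ∉ Set.range ρ → (LatticeRep.cmat c ρ l x).det = 0) ∧
       (∀ i : Fin n, S.a i ∣ S.bM.repr x (S.f i))) := by
    intro x
    constructor
    · intro hx
      constructor
      · intro l _
        have h1 : (((LatticeRep.cmat c ρ l x).det : ℤ) : ℚ) = 0 := by
          rw [hcast_det l x]
          have h2 := hWvanl l _ (hLW x hx)
          rwa [LatticeRep.cmatLin_apply] at h2
        exact_mod_cast h1
      · intro i
        have h1 := S.repr_apply_embedding_eq_repr_smul (m := ⟨x, hx⟩) (i := i)
        have h2 : S.bM.repr x (S.f i) = S.bN.repr (S.a i • (⟨x, hx⟩ : L)) i := h1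
        rw [h2, map_smul, Finsupp.smul_apply, smul_eq_mul]
        exact Dvd.intro _ rfl
    · rintro ⟨hcram, hdvds⟩
      have hxW := hk1 x hcram
      have hDx : D • x ∈ L := hspanc_le (hk2 x hxW)
      have hrepr0 : ∀ j : Fin d, j ∉ Set.range ⇑S.f → S.bM.repr x j = 0 := by
        intro j hj
        have h1 := S.repr_eq_zero_of_notMem_range (⟨D • x, hDx⟩ : L) hj
        have h2 : S.bM.repr (D • x) j = D * S.bM.repr x j := by
          rw [map_smul, Finsupp.smul_apply, smul_eq_mul]
        have h3 : D * S.bM.repr x j = 0 := by rw [← h2]; exact h1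
        exact (mul_eq_zero.mp h3).resolve_left hdetMz
      have hsum : x = ∑ i : Fin n, S.bM.repr x (S.f i) • S.bM (S.f i) := by
        have h2 : ∑ j ∈ Finset.univ.map S.f, S.bM.repr x j • S.bM j
            = ∑ i : Fin n, S.bM.repr x (S.f i) • S.bM (S.f i) :=
          Finset.sum_map _ _ _
        rw [← h2]
        have h3 : ∑ j ∈ Finset.univ.map S.f, S.bM.repr x j • S.bM j
            = ∑ j : Fin d, S.bM.repr x j • S.bM j := by
          apply Finset.sum_subset (Finset.subset_univ _)
          intro j _ hj
          have h4 : j ∉ Set.range ⇑S.f := by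
            rintro ⟨i, hi⟩
            exact hj (Finset.mem_map.mpr ⟨i, Finset.mem_univ i, hi⟩)
          rw [hrepr0 j h4, zero_smul]
        rw [h3]
        exact (S.bM.sum_repr x).symm
      rw [hsum]
      apply Submodule.sum_mem
      intro i _
      obtain ⟨ti, hti⟩ := hdvds i
      rw [hti, mul_comm, mul_smul, ← S.snf i]
      exact Submodule.smul_mem _ _ (hbNL i)
  -- the final data
  set aL : Fin d → Fin d → ℤ := fun l q => (LatticeRep.cmat c ρ l (Pi.single q 1)).det
    with haLdef
  have hdotaL : ∀ l x, dotZ (aL l) x = (LatticeRep.cmat c ρ l x).det := by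
    intro l x
    rw [dotZ]
    exact (LatticeRep.cmat_det_eq_dot c ρ l x).symm
  set γ : Fin d → ℕ × (Fin d → ℤ) := fun j =>
    if h : ∃ i, S.f i = j then (A h.choose, av h.choose)
    else (0, aL (E ⟨j, fun hmem => h hmem⟩ : {l : Fin d // l ∉ Set.range ρ}).1)
    with hγdef
  have hone_le_fact : 1 ≤ Nat.factorial d := Nat.one_le_iff_ne_zero.mpr d.factorial_ne_zero
  have hfb : Nat.factorial d * m ^ d ≤ Nat.factorial d ^ 2 * m ^ d := by
    apply Nat.mul_le_mul_right
    calc Nat.factorial d = Nat.factorial d * 1 := (mul_one _).symm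
      _ ≤ Nat.factorial d * Nat.factorial d := Nat.mul_le_mul_left _ hone_le_fact
      _ = Nat.factorial d ^ 2 := (sq _).symm
  have hAbound : ∀ i : Fin n, A i ≤ Nat.factorial d ^ 2 * m ^ d := by
    intro i
    have h1 : A i ∣ D.natAbs := Int.natAbs_dvd_natAbs.mpr (hadvd i)
    have hDpos : 0 < D.natAbs := Int.natAbs_pos.mpr hdetMz
    have h2 : A i ≤ D.natAbs := Nat.le_of_dvd hDpos h1
    have h3 : D.natAbs ≤ Nat.factorial d * m ^ d := by
      have h4 : ((D.natAbs : ℕ) : ℤ) ≤ ((Nat.factorial d * m ^ d : ℕ) : ℤ) := by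
        rw [← Int.abs_eq_natAbs]
        push_cast
        exact hDbound
      exact_mod_cast h4
    exact le_trans h2 (le_trans h3 hfb)
  have haLbound : ∀ l : Fin d, l ∉ Set.range ρ → ∀ q : Fin d,
      |aL l q| ≤ ((Nat.factorial d ^ 2 * m ^ d : ℕ) : ℤ) := by
    intro l hl q
    have hrltd : r < d := by
      have hns : ¬ Function.Surjective ρ := fun hs => hl (hs l)
      have h0 := Fintype.card_lt_of_injective_not_surjective ρ hρinj hns
      simpa using h0
    have hentry : ∀ s u, (AbsoluteValue.abs : AbsoluteValue ℤ ℤ)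
        (LatticeRep.cmat c ρ l (Pi.single q 1) s u) ≤ (m : ℤ) := by
      intro s u
      induction s using Fin.lastCases with
      | last =>
          rw [congrFun (LatticeRep.cmat_last c ρ l (Pi.single q 1)) u]
          by_cases hq : LatticeRep.rho' ρ l u = q
          · rw [hq]
            simpa using hone_le_m
          · simp only [AbsoluteValue.abs_apply]
            rw [Pi.single_eq_of_ne hq]
            simpa using le_trans zero_le_one hone_le_m
      | cast t =>
          rw [congrFun (LatticeRep.cmat_castSucc c ρ l (Pi.single q 1) t) u]
          exact hcm t _
    have h2 := Matrix.det_le hentry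
    simp only [Fintype.card_fin, nsmul_eq_mul, AbsoluteValue.abs_apply] at h2
    have h3 : ((Nat.factorial (r+1) : ℤ)) * (m : ℤ) ^ (r+1)
        ≤ ((Nat.factorial d ^ 2 * m ^ d : ℕ) : ℤ) := by
      push_cast
      calc ((Nat.factorial (r+1) : ℤ)) * (m : ℤ) ^ (r+1)
          ≤ (Nat.factorial d : ℤ) * (m : ℤ) ^ d := by
            apply mul_le_mul
            · exact_mod_cast Nat.factorial_le hrltd
            · exact pow_le_pow_right₀ hone_le_m hrltd
            · positivity
            · positivity
        _ ≤ ((Nat.factorial d : ℤ)) ^ 2 * (m : ℤ) ^ d := by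
            apply mul_le_mul_of_nonneg_right ?_ (by positivity)
            have h5 : (1 : ℤ) ≤ (Nat.factorial d : ℤ) := by exact_mod_cast hone_le_fact
            nlinarith
    rw [haLdef]
    simp only
    exact le_trans h2 h3
  refine ⟨γ, ?_, ?_, ?_⟩
  · intro x
    rw [hclosure x, hmem_iff x]
    constructor
    · rintro ⟨hc, hd⟩ j
      simp only [hγdef]
      by_cases h : ∃ i, S.f i = j
      · rw [dif_pos h]
        exact (hdvd_iff h.choose x).mpr (hd h.choose)
      · rw [dif_neg h]
        show ((0 : ℕ) : ℤ) ∣ dotZ (aL _) x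
        rw [Nat.cast_zero, zero_dvd_iff, hdotaL]
        exact hc _ (E ⟨j, fun hmem => h hmem⟩).2
    · intro hγx
      constructor
      · intro l hl
        set p := E.symm ⟨l, hl⟩ with hpdef
        have hnot : ¬ ∃ i, S.f i = p.1 := fun hex => p.2 hex
        have h1 := hγx p.1
        simp only [hγdef] at h1
        rw [dif_neg hnot] at h1
        have hE : (E ⟨p.1, fun hmem => hnot hmem⟩) = ⟨l, hl⟩ := by
          have hpp : (⟨p.1, fun hmem => hnot hmem⟩ : {j : Fin d // j ∉ Set.range ⇑S.f}) = p :=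
            rfl
          rw [hpp, hpdef, Equiv.apply_symm_apply]
        rw [hE] at h1
        have h2 : dotZ (aL l) x = 0 := by
          have h3 : (0 : ℤ) ∣ dotZ (aL l) x := by exact_mod_cast h1
          exact zero_dvd_iff.mp h3
        rw [hdotaL] at h2
        exact h2
      · intro i
        have hex : ∃ i', S.f i' = S.f i := ⟨i, rfl⟩
        have h1 := hγx (S.f i)
        simp only [hγdef] at h1
        rw [dif_pos hex] at h1
        have hii : hex.choose = i := S.f.injective hex.choose_spec
        have h2 := (hdvd_iff hex.choose x).mp h1
        rw [hii] at h2
        exact h2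
  · intro j
    simp only [hγdef]
    by_cases h : ∃ i, S.f i = j
    · rw [dif_pos h]
      exact hAbound h.choose
    · rw [dif_neg h]
      exact Nat.zero_le _
  · intro j q
    simp only [hγdef]
    by_cases h : ∃ i, S.f i = j
    · rw [dif_pos h]
      show |av h.choose q| ≤ _
      have h1 : 0 ≤ av h.choose q := Int.emod_nonneg _ (ne_of_gt (hApos h.choose))
      have h2 : av h.choose q < (A h.choose : ℤ) := Int.emod_lt_of_pos _ (hApos h.choose)
      have h3 : (A h.choose : ℤ) ≤ ((Nat.factorial d ^ 2 * m ^ d : ℕ) : ℤ) := by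
        exact_mod_cast hAbound h.choose
      rw [abs_of_nonneg h1]
      exact le_trans h2.le h3
    · rw [dif_neg h]
      show |aL (E ⟨j, fun hmem => h hmem⟩ : {l : Fin d // l ∉ Set.range ρ}).1 q| ≤ _
      exact haLbound _ (E ⟨j, fun hmem => h hmem⟩).2 q
end

section
/- Let L be a d×k integer matrix of rank r decomposed in blocks as L = [[A, A'],[B, B']], where A is a nonsingular r×r matrix, A' is r×(k−r), B is (d−r)×r, and B' is (d−r)×(k−r). Let M := [A A'] (an r×k full row rank matrix), and suppose U is a k×k unimodular integer matrix such that MU = [H 0] where H is a nonsingular, lower triangular, nonnegative integer r×r matrix (a Hermite normal form of M). Then the lattice spanned by the columns of L is exactly the set of x ∈ ℤ^d such that: (i) det(H) divides every coefficient of the row vector (x(1),…,x(r))·com(H), and (ii) det(A)·(x(r+1),…,x(d)) = (x(1),…,x(r))·com(A)·Bᵀ. -/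
open Matrix

/-- The cofactor matrix `com(M)`: the transpose of the adjugate, so that
`Mᵀ * com(M) = det M • 1`. -/
def comat {n : ℕ} (M : Matrix (Fin n) (Fin n) ℤ) : Matrix (Fin n) (Fin n) ℤ :=
  (M.adjugate)ᵀ

lemma vecMul_comat {n : ℕ} (M : Matrix (Fin n) (Fin n) ℤ) (v : Fin n → ℤ) :
    v ᵥ* comat M = M.adjugate *ᵥ v := by
  rw [comat, vecMul_transpose]

lemma vecMul_comat_mul_T {r d' : ℕ} (A : Matrix (Fin r) (Fin r) ℤ)
    (B : Matrix (Fin d') (Fin r) ℤ) (v : Fin r → ℤ) :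
    v ᵥ* (comat A * Bᵀ) = B *ᵥ (A.adjugate *ᵥ v) := by
  have h : comat A * Bᵀ = (B * A.adjugate)ᵀ := by rw [comat, transpose_mul]
  rw [h, vecMul_transpose, ← mulVec_mulVec]

lemma schur_key {r d' k' : ℕ}
    (A : Matrix (Fin r) (Fin r) ℤ) (A' : Matrix (Fin r) (Fin k') ℤ)
    (B : Matrix (Fin d') (Fin r) ℤ) (B' : Matrix (Fin d') (Fin k') ℤ)
    (hA : A.det ≠ 0)
    (L : Matrix (Fin r ⊕ Fin d') (Fin r ⊕ Fin k') ℤ)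
    (hL : L = Matrix.fromBlocks A A' B B')
    (hrank : L.rank = r) :
    B * A.adjugate * A' = A.det • B' := by
  by_contra hne
  have hent : ∃ j0 j1, (B * A.adjugate * A') j0 j1 ≠ A.det * B' j0 j1 := by
    by_contra h
    push_neg at h
    exact hne (by ext i j; simpa using h i j)
  obtain ⟨j0, j1, hj⟩ := hent
  -- the witness column combination
  set z : (Fin r ⊕ Fin k') → ℤ :=
    Sum.elim (A.adjugate *ᵥ (A' *ᵥ Pi.single j1 1)) (Pi.single j1 (-A.det)) with hz
  set c : (Fin r ⊕ Fin d') → ℤ := L *ᵥ z with hc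
  have hcval : c = Sum.elim (0 : Fin r → ℤ)
      ((B * A.adjugate * A') *ᵥ Pi.single j1 1 - A.det • (B' *ᵥ Pi.single j1 1)) := by
    rw [hc, hz, hL, fromBlocks_mulVec]
    simp only [Sum.elim_comp_inl, Sum.elim_comp_inr]
    funext q
    rcases q with i | j
    · simp only [Sum.elim_inl, Pi.add_apply, mulVec_mulVec, mul_adjugate,
        smul_mulVec, one_mulVec, mulVec_single, col_apply', MulOpposite.op_one, one_smul,
        op_smul_eq_mul, Pi.smul_apply, smul_eq_mul,
        Pi.zero_apply, mul_one]
      ring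
    · simp only [Sum.elim_inr, Pi.add_apply, Pi.sub_apply, Pi.smul_apply, smul_eq_mul,
        mulVec_mulVec, mulVec_single, col_apply', MulOpposite.op_one, one_smul,
        op_smul_eq_mul, mul_one]
      have hx : (B * A.adjugate * A') j j1 = ((B * A.adjugate) *ᵥ fun m => A' m j1) j := by
        simp [Matrix.mul_apply, mulVec, dotProduct]
      rw [hx]; ring
  have hctop : ∀ i, c (Sum.inl i) = 0 := by intro i; rw [hcval]; rfl
  have hcbot : c (Sum.inr j0) ≠ 0 := by
    rw [hcval]
    simp only [Sum.elim_inr, Pi.sub_apply, Pi.smul_apply, smul_eq_mul, mulVec_single, col_apply',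
      MulOpposite.op_one, one_smul, op_smul_eq_mul, mul_one]
    exact sub_ne_zero.mpr hj
  -- the linearly independent family
  set v : (Fin r ⊕ Unit) → (Fin r ⊕ Fin d') → ℤ :=
    Sum.elim (fun i q => L q (Sum.inl i)) (fun _ => c) with hv
  set S := LinearMap.range L.mulVecLin with hS
  have hmem : ∀ p, v p ∈ S := by
    rintro (i | u)
    · exact ⟨Pi.single (Sum.inl i) 1, by simp [hv, mulVecLin_apply, col_apply']⟩
    · exact ⟨z, by simp [hv, hc, mulVecLin_apply]⟩
  have hli : LinearIndependent ℤ v := by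
    rw [Fintype.linearIndependent_iff]
    intro g hg
    have hgl : ∀ i, g (Sum.inl i) = 0 := by
      have hAg : A *ᵥ (fun i => g (Sum.inl i)) = 0 := by
        funext j
        have h0 := congrFun hg (Sum.inl j)
        simp only [Fintype.sum_sum_type, Finset.sum_apply, Pi.add_apply, Pi.smul_apply,
          smul_eq_mul, hv, Sum.elim_inl, Sum.elim_inr, Pi.zero_apply, hL,
          fromBlocks_apply₁₁, Finset.univ_unique, Finset.sum_singleton] at h0
        rw [hctop j, mul_zero, add_zero] at h0
        simpa [mulVec, dotProduct, mul_comm] using h0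
      intro i
      have : A.det • (fun i => g (Sum.inl i)) = 0 := by
        have := congrArg (fun w => A.adjugate *ᵥ w) hAg
        simpa [mulVec_mulVec, adjugate_mul, smul_mulVec, one_mulVec] using this
      have := congrFun this i
      simp only [Pi.smul_apply, smul_eq_mul, Pi.zero_apply] at this
      exact (mul_eq_zero.mp this).resolve_left hA
    have hgr : g (Sum.inr ()) = 0 := by
      have h0 := congrFun hg (Sum.inr j0)
      simp only [Fintype.sum_sum_type, Finset.sum_apply, Pi.add_apply, Pi.smul_apply,
        smul_eq_mul, hv, Sum.elim_inl, Sum.elim_inr, Pi.zero_apply,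
        Finset.univ_unique, Finset.sum_singleton] at h0
      simp only [hgl, zero_mul, Finset.sum_const_zero, zero_add] at h0
      exact (mul_eq_zero.mp h0).resolve_right hcbot
    rintro (i | ⟨⟩)
    · exact hgl i
    · exact hgr
  have hli' : LinearIndependent ℤ (fun p => (⟨v p, hmem p⟩ : S)) := by
    apply LinearIndependent.of_comp S.subtype
    exact hli
  have hcard := hli'.fintype_card_le_finrank
  have hfr : Module.finrank ℤ S = r := hrank
  rw [hfr] at hcard
  simp [Fintype.card_sum] at hcard


/-- Characterization of the lattice spanned by the columns of a
block-decomposed integer matrix `L = [[A, A'],[B, B']]` of rank `r`, with `A`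
nonsingular, via the Hermite normal form `[H 0]` of `M = [A A']`. -/
theorem lattice_column_span_characterization
    (r d' k' : ℕ)
    (A : Matrix (Fin r) (Fin r) ℤ) (A' : Matrix (Fin r) (Fin k') ℤ)
    (B : Matrix (Fin d') (Fin r) ℤ) (B' : Matrix (Fin d') (Fin k') ℤ)
    (hA : A.det ≠ 0)
    (L : Matrix (Fin r ⊕ Fin d') (Fin r ⊕ Fin k') ℤ)
    (hL : L = Matrix.fromBlocks A A' B B')
    (hrank : L.rank = r)
    (M : Matrix (Fin r) (Fin r ⊕ Fin k') ℤ)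
    (hM : ∀ i j, M i j = L (Sum.inl i) j)
    (U : Matrix (Fin r ⊕ Fin k') (Fin r ⊕ Fin k') ℤ)
    (hU : U.det = 1 ∨ U.det = -1)
    (H : Matrix (Fin r) (Fin r) ℤ)
    (hH : H.det ≠ 0)
    (hHtri : ∀ i j : Fin r, i < j → H i j = 0)
    (hHnn : ∀ i j : Fin r, 0 ≤ H i j)
    (hMU1 : ∀ i j, (M * U) i (Sum.inl j) = H i j)
    (hMU2 : ∀ i j, (M * U) i (Sum.inr j) = 0) :
    ∀ x : (Fin r ⊕ Fin d') → ℤ,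
      (∃ z : (Fin r ⊕ Fin k') → ℤ, x = L.mulVec z) ↔
      ((∀ j : Fin r, H.det ∣ Matrix.vecMul (fun i => x (Sum.inl i)) (comat H) j) ∧
       (∀ j : Fin d', A.det * x (Sum.inr j) =
          Matrix.vecMul (fun i => x (Sum.inl i)) (comat A * Bᵀ) j)) := by
  have key : B * A.adjugate * A' = A.det • B' := schur_key A A' B B' hA L hL hrank
  have hUdet : IsUnit U.det := by
    rcases hU with h | h <;> rw [h]
    · exact isUnit_one
    · exact isUnit_one.neg
  -- top rows of L *ᵥ z are given by M
  have hMz : ∀ (z : (Fin r ⊕ Fin k') → ℤ) (i : Fin r), (L *ᵥ z) (Sum.inl i) = (M *ᵥ z) i := by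
    intro z i
    simp [mulVec, dotProduct, hM]
  -- (M * U) *ᵥ w = H *ᵥ (w ∘ Sum.inl)
  have hMUw : ∀ w : (Fin r ⊕ Fin k') → ℤ, (M * U) *ᵥ w = H *ᵥ (w ∘ Sum.inl) := by
    intro w
    funext i
    simp [mulVec, dotProduct, Fintype.sum_sum_type, hMU1, hMU2, Function.comp]
  -- forward, condition (ii), stated for arbitrary z
  have hfwd2 : ∀ (z : (Fin r ⊕ Fin k') → ℤ) (j : Fin d'),
      A.det * (L *ᵥ z) (Sum.inr j) =
        ((fun i => (L *ᵥ z) (Sum.inl i)) ᵥ* (comat A * Bᵀ)) j := by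
    intro z j
    rw [vecMul_comat_mul_T]
    have hz : z = Sum.elim (z ∘ Sum.inl) (z ∘ Sum.inr) := by
      funext p; cases p <;> rfl
    have hLz : L *ᵥ z = Sum.elim (A *ᵥ (z ∘ Sum.inl) + A' *ᵥ (z ∘ Sum.inr))
        (B *ᵥ (z ∘ Sum.inl) + B' *ᵥ (z ∘ Sum.inr)) := by
      conv_lhs => rw [hz]
      rw [hL, fromBlocks_mulVec]
      simp only [Sum.elim_comp_inl, Sum.elim_comp_inr]
    rw [hLz]
    have htop : (fun i => (Sum.elim (A *ᵥ (z ∘ Sum.inl) + A' *ᵥ (z ∘ Sum.inr))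
        (B *ᵥ (z ∘ Sum.inl) + B' *ᵥ (z ∘ Sum.inr))) (Sum.inl i))
        = A *ᵥ (z ∘ Sum.inl) + A' *ᵥ (z ∘ Sum.inr) := rfl
    rw [htop]
    have hrhs : B *ᵥ (A.adjugate *ᵥ (A *ᵥ (z ∘ Sum.inl) + A' *ᵥ (z ∘ Sum.inr)))
        = A.det • (B *ᵥ (z ∘ Sum.inl)) + A.det • (B' *ᵥ (z ∘ Sum.inr)) := by
      have e1 : A.adjugate *ᵥ (A *ᵥ (z ∘ Sum.inl)) = A.det • (z ∘ Sum.inl) := by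
        rw [mulVec_mulVec, adjugate_mul, smul_mulVec, one_mulVec]
      have e2 : B *ᵥ (A.adjugate *ᵥ (A' *ᵥ (z ∘ Sum.inr))) = A.det • (B' *ᵥ (z ∘ Sum.inr)) := by
        rw [mulVec_mulVec, mulVec_mulVec, key, smul_mulVec]
      rw [mulVec_add A.adjugate, mulVec_add B, e1, e2, mulVec_smul]
    rw [hrhs]
    simp [mul_add]
  intro x
  constructor
  · rintro ⟨z, rfl⟩
    constructor
    · intro j
      rw [vecMul_comat]
      set w := U⁻¹ *ᵥ z with hw
      have hzw : U *ᵥ w = z := by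
        rw [hw, mulVec_mulVec, mul_nonsing_inv _ hUdet, one_mulVec]
      have hx1 : (fun i => (L *ᵥ z) (Sum.inl i)) = H *ᵥ (w ∘ Sum.inl) := by
        funext i
        rw [hMz z i, ← hzw, mulVec_mulVec, hMUw]
      rw [hx1, mulVec_mulVec, adjugate_mul, smul_mulVec, one_mulVec]
      exact Dvd.intro _ rfl
    · exact hfwd2 z
  · rintro ⟨h1, h2⟩
    have h1' : ∀ j, H.det ∣ (H.adjugate *ᵥ fun i => x (Sum.inl i)) j := by
      intro j
      have := h1 j
      rwa [vecMul_comat] at this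
    choose y hy using h1'
    have hHy : H *ᵥ y = fun i => x (Sum.inl i) := by
      have h4 : H.adjugate *ᵥ (fun i => x (Sum.inl i)) = H.det • y := funext hy
      have h3 : H.det • (H *ᵥ y) = H.det • (fun i => x (Sum.inl i)) := by
        rw [← mulVec_smul, ← h4, mulVec_mulVec, mul_adjugate, smul_mulVec, one_mulVec]
      funext i
      have := congrFun h3 i
      simp only [Pi.smul_apply, smul_eq_mul] at this
      exact mul_left_cancel₀ hH this
    refine ⟨U *ᵥ Sum.elim y 0, ?_⟩
    have htop : ∀ i, (L *ᵥ (U *ᵥ Sum.elim y 0)) (Sum.inl i) = x (Sum.inl i) := by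
      intro i
      rw [hMz, mulVec_mulVec, hMUw]
      have : Sum.elim y (0 : Fin k' → ℤ) ∘ Sum.inl = y := rfl
      rw [this, hHy]
    funext p
    rcases p with i | j
    · exact (htop i).symm
    · have h5 := hfwd2 (U *ᵥ Sum.elim y 0) j
      have h6 : (fun i => (L *ᵥ (U *ᵥ Sum.elim y 0)) (Sum.inl i)) = fun i => x (Sum.inl i) :=
        funext htop
      rw [h6] at h5
      rw [← h2 j] at h5
      exact (mul_left_cancel₀ hA h5.symm)
end

section
/- For every configuration x ∈ ℕ^d and every word σ of Petri net actions, x ≥ H(σ) (componentwise) if, and only if, there exists a configuration y ∈ ℕ^d such that x →_σ y. -/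
/-- A configuration is a vector in `ℕ^d`. -/
abbrev Cfg (d : ℕ) := Fin d → ℕ

/-- A Petri net action is a pair of configurations. -/
abbrev PNAction (d : ℕ) := Cfg d × Cfg d

/-- Displacement of an action. -/
def disp {d : ℕ} (a : PNAction d) : Fin d → ℤ :=
  fun i => (a.2 i : ℤ) - (a.1 i : ℤ)

/-- Step relation of a single action. -/
def Step {d : ℕ} (a : PNAction d) (x y : Cfg d) : Prop :=
  ∃ c : Cfg d, x = a.1 + c ∧ y = a.2 + c

/-- Step relation of a word of actions. -/
def Fires {d : ℕ} : List (PNAction d) → Cfg d → Cfg d → Prop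
  | [], x, y => x = y
  | a :: σ, x, y => ∃ z, Step a x z ∧ Fires σ z y

/-- The hurdle of a word of Petri net actions: `H(ε) = 0` and
`H(aσ) = max{a₋, H(σ) − Δ(a)}` componentwise. -/
def hurdle {d : ℕ} : List (PNAction d) → Cfg d
  | [] => 0
  | a :: σ => fun i => (max ((a.1 i : ℤ)) ((hurdle σ i : ℤ) - disp a i)).toNat

/-! Firing `a` from `x` is possible exactly when `a₋ ≤ x`, and then leads to `x - a₋ + a₊`;
the recursion `H(aσ) = max{a₋, H(σ) − Δ(a)}` encodes precisely this condition together with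
`H(σ) ≤ x - a₋ + a₊`, so the claim follows by induction on `σ`. -/

section

variable {d : ℕ} {a : PNAction d} {σ : List (PNAction d)} {x : Cfg d}

theorem step_iff {z : Cfg d} : Step a x z ↔ a.1 ≤ x ∧ z = x - a.1 + a.2 := by
  constructor
  · rintro ⟨c, rfl, rfl⟩
    simp [add_comm]
  · rintro ⟨hx, rfl⟩
    exact ⟨x - a.1, (add_tsub_cancel_of_le hx).symm, add_comm _ _⟩

theorem hurdle_cons_le_iff : hurdle (a :: σ) ≤ x ↔ a.1 ≤ x ∧ hurdle σ ≤ x - a.1 + a.2 := by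
  simp only [Pi.le_def, ← forall_and]
  refine forall_congr' fun i => ?_
  simp only [hurdle, disp, Int.toNat_le, max_le_iff, Pi.add_apply, Pi.sub_apply]
  omega

theorem exists_fires_cons_iff :
    (∃ y, Fires (a :: σ) x y) ↔ a.1 ≤ x ∧ ∃ y, Fires σ (x - a.1 + a.2) y := by
  simp only [Fires, step_iff]
  constructor
  · rintro ⟨y, z, ⟨hx, rfl⟩, hy⟩
    exact ⟨hx, y, hy⟩
  · rintro ⟨hx, y, hy⟩
    exact ⟨y, _, ⟨hx, rfl⟩, hy⟩

end

/-- (Hack) For every configuration `x` and every word `σ` of Petri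
net actions, `x ≥ H(σ)` iff there exists a configuration `y` with `x →_σ y`. -/
theorem hurdle_characterization {d : ℕ} (x : Cfg d) (σ : List (PNAction d)) :
    hurdle σ ≤ x ↔ ∃ y : Cfg d, Fires σ x y := by
  induction σ generalizing x with
  | nil => simp [hurdle, Fires]
  | cons a σ ih => rw [hurdle_cons_le_iff, ih, exists_fires_cons_iff]
end

section
/- Let G = (Q, A, T) be an I-unfolding of a Petri net A. Then G is structurally-reversible if, and only if, there exists a function f : T → ℚ with f(t) > 0 for every t ∈ T such that: (1) for every q ∈ Q, the sum of f(t) over transitions t ∈ T leaving q equals the sum of f(t) over transitions t ∈ T entering q, and (2) Σ_{t∈T} f(t)·Δ(t) = 0, where Δ((p,a,q)) := Δ(a). -/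
open scoped BigOperators

/-- Infinity norm of an action. -/
def anorm {d : ℕ} (a : PNAction d) : ℕ :=
  Finset.univ.sup fun i => max (a.1 i) (a.2 i)

/-- Infinity norm of a Petri net. -/
def netNorm {d : ℕ} (A : Finset (PNAction d)) : ℕ := A.sup anorm

/-- Displacement of a word of actions. -/
def wdisp {d : ℕ} (σ : List (PNAction d)) : Fin d → ℤ :=
  (σ.map disp).sum

/-- Reachability relation of a Petri net. -/
def Reach {d : ℕ} (A : Finset (PNAction d)) (x y : Cfg d) : Prop :=
  ∃ σ : List (PNAction d), (∀ a ∈ σ, a ∈ A) ∧ Fires σ x y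

/-- Mutual reachability. -/
def MutualReach {d : ℕ} (A : Finset (PNAction d)) (x y : Cfg d) : Prop :=
  Reach A x y ∧ Reach A y x

/-- A strongly connected component of configurations: an equivalence class of mutual
reachability. -/
def IsSCCC {d : ℕ} (A : Finset (PNAction d)) (C : Set (Cfg d)) : Prop :=
  ∃ c₀ : Cfg d, C = {x | MutualReach A c₀ x}

/-- An `I`-configuration. -/
abbrev ICfg (d : ℕ) (I : Finset (Fin d)) := {i : Fin d // i ∈ I} → ℕ

/-- Restriction of a configuration to the components in `I`. -/
def restrictC {d : ℕ} (I : Finset (Fin d)) (c : Cfg d) : ICfg d I := fun i => c i.1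

/-- Step relation of an action on `I`-configurations. -/
def IStep {d : ℕ} {I : Finset (Fin d)} (a : PNAction d) (p q : ICfg d I) : Prop :=
  ∃ c : ICfg d I, p = restrictC I a.1 + c ∧ q = restrictC I a.2 + c

/-- A transition of an `I`-unfolding. -/
abbrev UTrans (d : ℕ) (I : Finset (Fin d)) := ICfg d I × PNAction d × ICfg d I

/-- Path from `p` to `q` in a transition set. -/
def IsPath {d : ℕ} {I : Finset (Fin d)} (T : Finset (UTrans d I)) :
    List (UTrans d I) → ICfg d I → ICfg d I → Prop
  | [], p, q => p = q
  | t :: π, p, q => t ∈ T ∧ t.1 = p ∧ IsPath T π t.2.2 q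

/-- Label of a path. -/
def plabel {d : ℕ} {I : Finset (Fin d)} (π : List (UTrans d I)) : List (PNAction d) :=
  π.map fun t => t.2.1

/-- Displacement of a path. -/
def pdisp {d : ℕ} {I : Finset (Fin d)} (π : List (UTrans d I)) : Fin d → ℤ :=
  wdisp (plabel π)

/-- An `I`-unfolding of a Petri net `A`. -/
structure Unfolding (d : ℕ) (I : Finset (Fin d)) (A : Finset (PNAction d)) where
  Q : Finset (ICfg d I)
  T : Finset (UTrans d I)
  Q_nonempty : Q.Nonempty
  T_mem : ∀ t ∈ T, t.1 ∈ Q ∧ t.2.1 ∈ A ∧ t.2.2 ∈ Q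
  T_step : ∀ t ∈ T, IStep t.2.1 t.1 t.2.2
  connected : ∀ p ∈ Q, ∀ q ∈ Q, ∃ π, IsPath T π p q

/-- Structural reversibility. -/
def StructRev {d : ℕ} {I : Finset (Fin d)} {A : Finset (PNAction d)}
    (G : Unfolding d I A) : Prop :=
  ∀ t ∈ G.T, ∃ π, IsPath G.T π t.2.2 t.1 ∧ wdisp (plabel (t :: π)) = 0

/-- Simple cycle on a state `q`. -/
def SimpleCycle {d : ℕ} {I : Finset (Fin d)} (T : Finset (UTrans d I))
    (π : List (UTrans d I)) (q : ICfg d I) : Prop :=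
  IsPath T π q q ∧ π ≠ [] ∧ (π.map fun t => t.2.2).Nodup

/-- The lattice spanned by the displacements of the simple cycles of `G`. -/
def LG {d : ℕ} {I : Finset (Fin d)} {A : Finset (PNAction d)}
    (G : Unfolding d I A) : AddSubgroup (Fin d → ℤ) :=
  AddSubgroup.closure {v | ∃ q ∈ G.Q, ∃ π, SimpleCycle G.T π q ∧ pdisp π = v}

/-- The coset `Δ(π) + L_G` for paths `π` from `p` to `q`. -/
def LpGq {d : ℕ} {I : Finset (Fin d)} {A : Finset (PNAction d)}
    (G : Unfolding d I A) (p q : ICfg d I) : Set (Fin d → ℤ) :=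
  {v | ∃ π, IsPath G.T π p q ∧ v - pdisp π ∈ LG G}

/-- The bound `b := (3dm)^((d+2)^(2d+1))`. -/
def bVal (d m : ℕ) : ℕ := (3 * d * m) ^ ((d + 2) ^ (2 * d + 1))

/-- The threshold `m·r³·(3drm)^d`. -/
def thrVal (d m r : ℕ) : ℕ := m * r ^ 3 * (3 * d * r * m) ^ d

/-- A pumping pair for `(q, G)`: a pair of words labeling cycles on `q` of length at
most `d·b^d`. -/
def PumpingPair {d : ℕ} {I : Finset (Fin d)} {A : Finset (PNAction d)}
    (G : Unfolding d I A) (q : ICfg d I) (u v : List (PNAction d)) : Prop :=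
  (∃ α, IsPath G.T α q q ∧ plabel α = u ∧ α.length ≤ d * (bVal d (netNorm A)) ^ d) ∧
  (∃ β, IsPath G.T β q q ∧ plabel β = v ∧ β.length ≤ d * (bVal d (netNorm A)) ^ d)

/-- The upward-closed set `U_{q,G}`. -/
def UqG {d : ℕ} {I : Finset (Fin d)} {A : Finset (PNAction d)}
    (G : Unfolding d I A) (q : ICfg d I) : Set (Cfg d) :=
  {c | q ≤ restrictC I c ∧ ∃ u v, PumpingPair G q u v ∧
    ∃ cm cp : Cfg d, Fires u cm c ∧ Fires v c cp ∧
      ∀ i : Fin d, i ∉ I →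
        thrVal d (netNorm A) G.Q.card ≤ cm i ∧ thrVal d (netNorm A) G.Q.card ≤ cp i}

section EulerHelpers

variable {d : ℕ} {I : Finset (Fin d)}

/-- Count of a transition in a path. -/
def cnt (π : List (UTrans d I)) (s : UTrans d I) : ℕ := π.count s

lemma cnt_nil (s : UTrans d I) : cnt [] s = 0 := rfl

lemma cnt_cons (t : UTrans d I) (π : List (UTrans d I)) (s : UTrans d I) :
    cnt (t :: π) s = (if t = s then 1 else 0) + cnt π s := by
  simp [cnt, List.count_cons, Nat.add_comm]

lemma cnt_append (x y : List (UTrans d I)) (s : UTrans d I) :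
    cnt (x ++ y) s = cnt x s + cnt y s := List.count_append

lemma cnt_pos_iff {π : List (UTrans d I)} {s : UTrans d I} : s ∈ π ↔ cnt π s ≠ 0 := by
  rw [← List.count_pos_iff (l := π) (a := s)]
  show _ ↔ List.count s π ≠ 0
  omega

lemma isPath_nil {T : Finset (UTrans d I)} {p q : ICfg d I} (h : IsPath T [] p q) : p = q := h

lemma isPath_mem {T : Finset (UTrans d I)} :
    ∀ {π : List (UTrans d I)} {p q : ICfg d I}, IsPath T π p q → ∀ s ∈ π, s ∈ T := by
  intro π
  induction π with
  | nil => intro p q h s hs; simp at hs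
  | cons t π ih =>
    intro p q h s hs
    obtain ⟨h1, h2, h3⟩ := h
    rcases List.mem_cons.1 hs with hs | hs
    · exact hs ▸ h1
    · exact ih h3 s hs

lemma isPath_append {T : Finset (UTrans d I)} {x y : List (UTrans d I)} {p q r : ICfg d I}
    (hx : IsPath T x p q) (hy : IsPath T y q r) : IsPath T (x ++ y) p r := by
  induction x generalizing p with
  | nil => rw [isPath_nil hx]; exact hy
  | cons t x ih =>
    obtain ⟨h1, h2, h3⟩ := hx
    exact ⟨h1, h2, ih h3⟩

lemma isPath_split {T : Finset (UTrans d I)} {x y : List (UTrans d I)} {p q : ICfg d I}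
    (h : IsPath T (x ++ y) p q) : ∃ r, IsPath T x p r ∧ IsPath T y r q := by
  induction x generalizing p with
  | nil => exact ⟨p, rfl, h⟩
  | cons t x ih =>
    obtain ⟨h1, h2, h3⟩ := h
    obtain ⟨r, hr1, hr2⟩ := ih h3
    exact ⟨r, ⟨h1, h2, hr1⟩, hr2⟩

lemma wdisp_apply {d' : ℕ} (σ : List (PNAction d')) (i : Fin d') :
    wdisp σ i = (σ.map (fun a => disp a i)).sum := by
  induction σ with
  | nil => rfl
  | cons a σ ih =>
    simp only [wdisp, List.map_cons, List.sum_cons] at *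
    rw [Pi.add_apply, ih]

lemma pdisp_apply (π : List (UTrans d I)) (i : Fin d) :
    wdisp (plabel π) i = (π.map (fun s => disp s.2.1 i)).sum := by
  rw [plabel, wdisp_apply, List.map_map]; rfl

end EulerHelpers

section EulerHelpers2

variable {d : ℕ} {I : Finset (Fin d)}

/-- Generic: sum over a finset of (count * g). -/
lemma sum_cnt_mul {R : Type*} [NonAssocSemiring R] (T : Finset (UTrans d I))
    (g : UTrans d I → R) :
    ∀ (π : List (UTrans d I)), (∀ s ∈ π, s ∈ T) →
      ∑ s ∈ T, (cnt π s : R) * g s = (π.map g).sum := by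
  intro π
  induction π with
  | nil => intro _; simp [cnt_nil]
  | cons t π ih =>
    intro hmem
    have ht : t ∈ T := hmem t (List.mem_cons_self)
    have hmem' : ∀ s ∈ π, s ∈ T := fun s hs => hmem s (List.mem_cons_of_mem t hs)
    have : ∀ s ∈ T, (cnt (t :: π) s : R) * g s
        = (if t = s then g s else 0) + (cnt π s : R) * g s := by
      intro s _
      rw [cnt_cons]
      push_cast
      rw [add_mul]
      congr 1
      split <;> simp
    rw [Finset.sum_congr rfl this, Finset.sum_add_distrib, Finset.sum_ite_eq T t g, if_pos ht,
      ih hmem', List.map_cons, List.sum_cons]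

/-- Sum of counts over a filtered finset equals filtered length. -/
lemma sum_cnt_filter (T : Finset (UTrans d I)) (P : UTrans d I → Prop) [DecidablePred P] :
    ∀ (π : List (UTrans d I)), (∀ s ∈ π, s ∈ T) →
      ∑ s ∈ T.filter P, cnt π s = (π.filter (fun s => decide (P s))).length := by
  intro π
  induction π with
  | nil => intro _; simp [cnt_nil]
  | cons t π ih =>
    intro hmem
    have ht : t ∈ T := hmem t (List.mem_cons_self)
    have hmem' : ∀ s ∈ π, s ∈ T := fun s hs => hmem s (List.mem_cons_of_mem t hs)
    have h1 : ∑ s ∈ T.filter P, cnt (t :: π) s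
        = (∑ s ∈ T.filter P, (if t = s then 1 else 0)) + ∑ s ∈ T.filter P, cnt π s := by
      rw [← Finset.sum_add_distrib]
      exact Finset.sum_congr rfl fun s _ => cnt_cons t π s
    have h2 : (∑ s ∈ T.filter P, (if t = s then (1:ℕ) else 0)) = if P t then 1 else 0 := by
      rw [Finset.sum_ite_eq (T.filter P) t (fun _ => (1:ℕ))]
      by_cases h : P t <;> simp [Finset.mem_filter, ht, h]
    rw [h1, h2, ih hmem', List.filter_cons]
    by_cases h : P t <;> simp [h, Nat.add_comm]

/-- Out-degree count of a path at a vertex. -/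
def outL (π : List (UTrans d I)) (v : ICfg d I) : ℕ :=
  (π.filter (fun s => decide (s.1 = v))).length

/-- In-degree count of a path at a vertex. -/
def inL (π : List (UTrans d I)) (v : ICfg d I) : ℕ :=
  (π.filter (fun s => decide (s.2.2 = v))).length

/-- Quasi-balance of a walk's edge counts. -/
lemma walk_bal {T : Finset (UTrans d I)} :
    ∀ {π : List (UTrans d I)} {p q : ICfg d I}, IsPath T π p q → ∀ v : ICfg d I,
      (outL π v : ℤ) - (inL π v : ℤ)
        = (if p = v then 1 else 0) - (if q = v then 1 else 0) := by
  intro π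
  induction π with
  | nil =>
    intro p q h v
    rw [isPath_nil h]
    simp [outL, inL]
  | cons t π ih =>
    intro p q h v
    obtain ⟨h1, h2, h3⟩ := h
    have := ih h3 v
    have ho : outL (t :: π) v = (if t.1 = v then 1 else 0) + outL π v := by
      rw [outL, List.filter_cons]
      by_cases h : t.1 = v <;> simp [h, outL, Nat.add_comm]
    have hi : inL (t :: π) v = (if t.2.2 = v then 1 else 0) + inL π v := by
      rw [inL, List.filter_cons]
      by_cases h : t.2.2 = v <;> simp [h, inL, Nat.add_comm]
    rw [ho, hi, h2] at *
    push_cast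
    omega

end EulerHelpers2

section EulerHelpers3

variable {d : ℕ} {I : Finset (Fin d)}

/-- Out-flow at a vertex. -/
def outF (T : Finset (UTrans d I)) (F : UTrans d I → ℕ) (v : ICfg d I) : ℕ :=
  ∑ s ∈ T.filter (fun s => s.1 = v), F s

/-- In-flow at a vertex. -/
def inF (T : Finset (UTrans d I)) (F : UTrans d I → ℕ) (v : ICfg d I) : ℕ :=
  ∑ s ∈ T.filter (fun s => s.2.2 = v), F s

lemma sum_sub_one (X : Finset (UTrans d I)) (F : UTrans d I → ℕ) (t : UTrans d I)
    (ht : F t ≠ 0) :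
    ((∑ u ∈ X, (if u = t then F u - 1 else F u) : ℕ) : ℤ)
      = (∑ u ∈ X, F u : ℕ) - (if t ∈ X then 1 else 0) := by
  by_cases h : t ∈ X
  · rw [← Finset.sum_erase_add X _ h, ← Finset.sum_erase_add X F h, if_pos h]
    have h1 : ∑ u ∈ X.erase t, (if u = t then F u - 1 else F u) = ∑ u ∈ X.erase t, F u :=
      Finset.sum_congr rfl fun u hu => by rw [if_neg (Finset.ne_of_mem_erase hu)]
    rw [h1, if_pos rfl]
    have : 1 ≤ F t := Nat.one_le_iff_ne_zero.2 ht
    push_cast [this]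
    ring
  · rw [if_neg h]
    have h1 : ∑ u ∈ X, (if u = t then F u - 1 else F u) = ∑ u ∈ X, F u :=
      Finset.sum_congr rfl fun u hu => by
        rw [if_neg]; rintro rfl; exact h hu
    rw [h1]; push_cast; ring

lemma outF_sub_one (T : Finset (UTrans d I)) (F : UTrans d I → ℕ) (t : UTrans d I)
    (ht : F t ≠ 0) (htT : t ∈ T) (v : ICfg d I) :
    (outF T (fun u => if u = t then F u - 1 else F u) v : ℤ)
      = (outF T F v : ℤ) - (if t.1 = v then 1 else 0) := by
  rw [outF, outF, sum_sub_one _ F t ht]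
  congr 1
  by_cases h : t.1 = v <;> simp [Finset.mem_filter, htT, h]

lemma inF_sub_one (T : Finset (UTrans d I)) (F : UTrans d I → ℕ) (t : UTrans d I)
    (ht : F t ≠ 0) (htT : t ∈ T) (v : ICfg d I) :
    (inF T (fun u => if u = t then F u - 1 else F u) v : ℤ)
      = (inF T F v : ℤ) - (if t.2.2 = v then 1 else 0) := by
  rw [inF, inF, sum_sub_one _ F t ht]
  congr 1
  by_cases h : t.2.2 = v <;> simp [Finset.mem_filter, htT, h]

/-- Extend/extract a walk from `v` to `p` within a quasi-balanced flow budget. -/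
lemma ext_walk (T : Finset (UTrans d I)) :
    ∀ (m : ℕ) (F : UTrans d I → ℕ), (∀ s, F s ≠ 0 → s ∈ T) → (∑ s ∈ T, F s ≤ m) →
    ∀ v p : ICfg d I, v ≠ p →
    (∀ w, (outF T F w : ℤ) - (inF T F w : ℤ)
        = (if v = w then 1 else 0) - (if p = w then 1 else 0)) →
    ∃ π, IsPath T π v p ∧ ∀ s, cnt π s ≤ F s := by
  intro m
  induction m with
  | zero =>
    intro F hsupp hsum v p hvp hqb
    exfalso
    have h1 := hqb v
    rw [if_pos rfl, if_neg (fun h => hvp h.symm)] at h1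
    have h2 : outF T F v ≤ ∑ s ∈ T, F s :=
      Finset.sum_le_sum_of_subset (Finset.filter_subset _ _)
    omega
  | succ m ih =>
    intro F hsupp hsum v p hvp hqb
    -- find an edge leaving v with positive flow
    have h1 := hqb v
    rw [if_pos rfl, if_neg (fun h => hvp h.symm)] at h1
    have h2 : 1 ≤ outF T F v := by omega
    have h3 : ∃ s ∈ T.filter (fun s => s.1 = v), F s ≠ 0 := by
      by_contra hc
      push_neg at hc
      have : outF T F v = 0 := Finset.sum_eq_zero hc
      omega
    obtain ⟨s, hsf, hFs⟩ := h3
    have hsT : s ∈ T := (Finset.mem_filter.1 hsf).1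
    have hs1 : s.1 = v := (Finset.mem_filter.1 hsf).2
    by_cases hend : s.2.2 = p
    · refine ⟨[s], ⟨hsT, hs1, hend⟩, ?_⟩
      intro u
      rw [cnt_cons, cnt_nil]
      by_cases h : s = u
      · subst h; simp; omega
      · simp [h]
    · -- recurse with decremented flow
      set F' : UTrans d I → ℕ := fun u => if u = s then F u - 1 else F u with hF'
      have hsupp' : ∀ u, F' u ≠ 0 → u ∈ T := by
        intro u hu
        apply hsupp
        by_cases h : u = s <;> simp [hF', h] at hu ⊢ <;> omega
      have hsum' : ∑ u ∈ T, F' u ≤ m := by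
        have := sum_sub_one T F s hFs
        rw [if_pos hsT] at this
        simp only [hF']
        omega
      have hqb' : ∀ w, (outF T F' w : ℤ) - (inF T F' w : ℤ)
          = (if s.2.2 = w then 1 else 0) - (if p = w then 1 else 0) := by
        intro w
        rw [outF_sub_one T F s hFs hsT w, inF_sub_one T F s hFs hsT w, hs1]
        have := hqb w
        omega
      obtain ⟨π', hπ', hcnt'⟩ := ih F' hsupp' hsum' s.2.2 p hend hqb'
      refine ⟨s :: π', ⟨hsT, hs1, hπ'⟩, ?_⟩
      intro u
      have := hcnt' u
      rw [cnt_cons]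
      by_cases h : s = u
      · subst h; simp [hF'] at this ⊢; omega
      · have h2 : u ≠ s := fun hh => h hh.symm
        simp [h, hF', h2] at this ⊢; omega

/-- Extract a closed walk through a transition with positive flow. -/
lemma extract_cycle (T : Finset (UTrans d I)) (F : UTrans d I → ℕ)
    (hsupp : ∀ s, F s ≠ 0 → s ∈ T)
    (hbal : ∀ w, (outF T F w : ℤ) = (inF T F w : ℤ))
    (t : UTrans d I) (ht : F t ≠ 0) :
    ∃ π, IsPath T (t :: π) t.1 t.1 ∧ ∀ s, cnt (t :: π) s ≤ F s := by
  have htT : t ∈ T := hsupp t ht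
  by_cases hend : t.2.2 = t.1
  · refine ⟨[], ⟨htT, rfl, hend⟩, ?_⟩
    intro u
    rw [cnt_cons, cnt_nil]
    by_cases h : t = u
    · subst h; simp; omega
    · simp [h]
  · set F' : UTrans d I → ℕ := fun u => if u = t then F u - 1 else F u with hF'
    have hsupp' : ∀ u, F' u ≠ 0 → u ∈ T := by
      intro u hu
      apply hsupp
      by_cases h : u = t <;> simp [hF', h] at hu ⊢ <;> omega
    have hqb' : ∀ w, (outF T F' w : ℤ) - (inF T F' w : ℤ)
        = (if t.2.2 = w then 1 else 0) - (if t.1 = w then 1 else 0) := by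
      intro w
      rw [outF_sub_one T F t ht htT w, inF_sub_one T F t ht htT w]
      have := hbal w
      omega
    obtain ⟨π', hπ', hcnt'⟩ := ext_walk T (∑ u ∈ T, F' u) F' hsupp' le_rfl t.2.2 t.1 hend hqb'
    refine ⟨π', ⟨htT, rfl, hπ'⟩, ?_⟩
    intro u
    have := hcnt' u
    rw [cnt_cons]
    by_cases h : t = u
    · subst h; simp [hF'] at this ⊢; omega
    · have h2 : u ≠ t := fun hh => h hh.symm
      simp [h, hF', h2] at this ⊢; omega

end EulerHelpers3

section EulerHelpers4

variable {d : ℕ} {I : Finset (Fin d)}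

/-- Total count over a list of walks. -/
def cntL (L : List (List (UTrans d I) × ICfg d I)) (s : UTrans d I) : ℕ :=
  (L.map (fun w => cnt w.1 s)).sum

lemma cntL_nil (s : UTrans d I) : cntL ([] : List (List (UTrans d I) × ICfg d I)) s = 0 := rfl

lemma cntL_cons (w : List (UTrans d I) × ICfg d I) (L : List (List (UTrans d I) × ICfg d I))
    (s : UTrans d I) : cntL (w :: L) s = cnt w.1 s + cntL L s := by
  simp [cntL]

lemma cntL_perm {L L' : List (List (UTrans d I) × ICfg d I)} (h : L.Perm L')
    (s : UTrans d I) : cntL L s = cntL L' s :=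
  (List.Perm.sum_eq (h.map (fun (w : List (UTrans d I) × ICfg d I) => cnt w.1 s)))

/-- Decomposition of a balanced flow into closed walks. -/
lemma decomp (T : Finset (UTrans d I)) :
    ∀ (m : ℕ) (F : UTrans d I → ℕ), (∑ s ∈ T, F s ≤ m) →
      (∀ s, F s ≠ 0 → s ∈ T) →
      (∀ w, (outF T F w : ℤ) = (inF T F w : ℤ)) →
      ∃ L : List (List (UTrans d I) × ICfg d I),
        (∀ w ∈ L, IsPath T w.1 w.2 w.2 ∧ w.1 ≠ []) ∧ ∀ s, cntL L s = F s := by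
  intro m
  induction m with
  | zero =>
    intro F hsum hsupp _
    refine ⟨[], by simp, fun s => ?_⟩
    rw [cntL_nil]
    by_cases h : s ∈ T
    · have : F s ≤ ∑ u ∈ T, F u := Finset.single_le_sum (fun _ _ => Nat.zero_le _) h
      omega
    · by_contra hc
      exact h (hsupp s fun h0 => hc h0.symm)
  | succ m ih =>
    intro F hsum hsupp hbal
    by_cases hF : ∀ s ∈ T, F s = 0
    · refine ⟨[], by simp, fun s => ?_⟩
      rw [cntL_nil]
      by_cases h : s ∈ T
      · exact (hF s h).symm
      · by_contra hc
        exact h (hsupp s fun h0 => hc h0.symm)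
    · push_neg at hF
      obtain ⟨t, htT, hFt⟩ := hF
      obtain ⟨π, hπ, hcnt⟩ := extract_cycle T F hsupp hbal t hFt
      set w : List (UTrans d I) := t :: π with hw
      have hwmem : ∀ s ∈ w, s ∈ T := isPath_mem hπ
      set F' : UTrans d I → ℕ := fun u => F u - cnt w u with hF'
      have hsupp' : ∀ u, F' u ≠ 0 → u ∈ T := by
        intro u hu
        apply hsupp
        simp only [hF'] at hu
        omega
      -- sums of counts over filters
      have houtc : ∀ v, ∑ s ∈ T.filter (fun s => s.1 = v), cnt w s = outL w v :=
        fun v => sum_cnt_filter T _ w hwmem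
      have hinc : ∀ v, ∑ s ∈ T.filter (fun s => s.2.2 = v), cnt w s = inL w v :=
        fun v => sum_cnt_filter T _ w hwmem
      have hsub : ∀ (X : Finset (UTrans d I)),
          ((∑ u ∈ X, F' u : ℕ) : ℤ) = (∑ u ∈ X, F u : ℕ) - (∑ u ∈ X, cnt w u : ℕ) := by
        intro X
        push_cast
        rw [← Finset.sum_sub_distrib]
        apply Finset.sum_congr rfl
        intro u _
        have := hcnt u
        simp only [hF']
        push_cast [Nat.cast_sub (by omega : cnt w u ≤ F u)]
        ring
      have hbal' : ∀ v, (outF T F' v : ℤ) = (inF T F' v : ℤ) := by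
        intro v
        have hwb := walk_bal hπ v
        rw [outF, inF, hsub, hsub, houtc, hinc]
        have := hbal v
        rw [outF, inF] at this
        omega
      have hsum' : ∑ u ∈ T, F' u ≤ m := by
        have h1 := hsub T
        have h2 : ∑ u ∈ T, cnt w u = w.length := by
          have := sum_cnt_filter T (fun _ => True) w hwmem
          simpa using this
        have h3 : 1 ≤ w.length := by rw [hw]; simp
        have h4 : F t ≤ ∑ u ∈ T, F u := Finset.single_le_sum (fun _ _ => Nat.zero_le _) htT
        omega
      obtain ⟨L', hL', hcntL'⟩ := ih F' hsum' hsupp' hbal'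
      refine ⟨(w, t.1) :: L', ?_, ?_⟩
      · intro u hu
        rcases List.mem_cons.1 hu with h | h
        · subst h
          exact ⟨hπ, by rw [hw]; simp⟩
        · exact hL' u h
      · intro s
        rw [cntL_cons, hcntL' s]
        have := hcnt s
        simp only [hF']
        omega

end EulerHelpers4

section EulerHelpers5

variable {d : ℕ} {I : Finset (Fin d)}

lemma edge_fst_mem {T : Finset (UTrans d I)} :
    ∀ {π : List (UTrans d I)} {p q : ICfg d I}, IsPath T π p q →
      ∀ {s}, s ∈ π → s.1 ∈ p :: π.map (fun u => u.2.2) := by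
  intro π
  induction π with
  | nil => intro p q h s hs; simp at hs
  | cons t π ih =>
    intro p q h s hs
    obtain ⟨h1, h2, h3⟩ := h
    rcases List.mem_cons.1 hs with rfl | hs
    · exact List.mem_cons.2 (Or.inl h2)
    · have := ih h3 hs
      rcases List.mem_cons.1 this with h4 | h4
      · simp [h4]
      · simp only [List.map_cons, List.mem_cons]
        tauto

lemma visit_split {T : Finset (UTrans d I)} {π : List (UTrans d I)} {p q v : ICfg d I}
    (h : IsPath T π p q) (hv : v ∈ π.map (fun u => u.2.2)) :
    ∃ x y, π = x ++ y ∧ IsPath T x p v ∧ IsPath T y v q := by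
  obtain ⟨s, hs, hs2⟩ := List.mem_map.1 hv
  obtain ⟨x, y, rfl⟩ := List.append_of_mem hs
  obtain ⟨r, hx, hsy⟩ := isPath_split h
  obtain ⟨h1, h2, h3⟩ := hsy
  refine ⟨x ++ [s], y, by simp, ?_, hs2 ▸ h3⟩
  exact isPath_append hx ⟨h1, h2, hs2⟩

lemma rotate_cycle {T : Finset (UTrans d I)} {π : List (UTrans d I)} {c v : ICfg d I}
    (h : IsPath T π c c) (hv : v ∈ c :: π.map (fun u => u.2.2)) :
    ∃ π', IsPath T π' v v ∧ ∀ s, cnt π' s = cnt π s := by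
  rcases List.mem_cons.1 hv with rfl | hv
  · exact ⟨π, h, fun s => rfl⟩
  · obtain ⟨x, y, rfl, hx, hy⟩ := visit_split h hv
    exact ⟨y ++ x, isPath_append hy hx, fun s => by rw [cnt_append, cnt_append]; omega⟩

lemma splice_cycle {T : Finset (UTrans d I)} {W : List (UTrans d I)} {b v : ICfg d I}
    (h1 : IsPath T W b b) (hv : v ∈ b :: W.map (fun u => u.2.2))
    {π : List (UTrans d I)} (h2 : IsPath T π v v) :
    ∃ W', IsPath T W' b b ∧ ∀ s, cnt W' s = cnt W s + cnt π s := by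
  rcases List.mem_cons.1 hv with rfl | hv
  · exact ⟨π ++ W, isPath_append h2 h1, fun s => by rw [cnt_append]; omega⟩
  · obtain ⟨x, y, rfl, hx, hy⟩ := visit_split h1 hv
    exact ⟨x ++ π ++ y, isPath_append (isPath_append hx h2) hy,
      fun s => by simp only [cnt_append]; omega⟩

lemma mem_split_edge {T : Finset (UTrans d I)} {π : List (UTrans d I)} {p q : ICfg d I}
    (h : IsPath T π p q) {t : UTrans d I} (ht : t ∈ π) :
    ∃ x y, π = x ++ t :: y ∧ IsPath T x p t.1 ∧ t ∈ T ∧ IsPath T y t.2.2 q := by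
  obtain ⟨x, y, rfl⟩ := List.append_of_mem ht
  obtain ⟨r, hx, hsy⟩ := isPath_split h
  obtain ⟨h1, h2, h3⟩ := hsy
  exact ⟨x, y, rfl, h2 ▸ hx, h1, h3⟩

/-- Base of a nonempty closed walk is in `Q`. -/
lemma base_mem_Q {A : Finset (PNAction d)} (G : Unfolding d I A)
    {W : List (UTrans d I)} {b : ICfg d I} (h : IsPath G.T W b b) (hne : W ≠ []) :
    b ∈ G.Q := by
  cases W with
  | nil => exact absurd rfl hne
  | cons t rest =>
    obtain ⟨h1, h2, _⟩ := h
    exact h2 ▸ (G.T_mem t h1).1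

/-- Merge a family of closed walks covering all transitions into one closed walk. -/
lemma merge_walks {A : Finset (PNAction d)} (G : Unfolding d I A) :
    ∀ (k : ℕ) (L : List (List (UTrans d I) × ICfg d I)) (W : List (UTrans d I)) (b : ICfg d I),
      L.length ≤ k → IsPath G.T W b b → W ≠ [] →
      (∀ w ∈ L, IsPath G.T w.1 w.2 w.2 ∧ w.1 ≠ []) →
      (∀ s ∈ G.T, s ∈ W ∨ ∃ w ∈ L, s ∈ w.1) →
      ∃ π, IsPath G.T π b b ∧ ∀ s, cnt π s = cnt W s + cntL L s := by
  intro k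
  induction k with
  | zero =>
    intro L W b hlen hW hWne hL hcov
    have hLnil : L = [] := List.eq_nil_of_length_eq_zero (Nat.le_zero.1 hlen)
    subst hLnil
    exact ⟨W, hW, fun s => by simp [cntL_nil]⟩
  | succ k ih =>
    intro L W b hlen hW hWne hL hcov
    by_cases hLnil : L = []
    · exact ⟨W, hW, fun s => by simp [hLnil, cntL_nil]⟩
    · by_cases hsh : ∃ w ∈ L, ∃ v, v ∈ w.2 :: w.1.map (fun u => u.2.2) ∧
          v ∈ b :: W.map (fun u => u.2.2)
      · obtain ⟨w, hwL, v, hv1, hv2⟩ := hsh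
        obtain ⟨π', hπ', hcntπ'⟩ := rotate_cycle (hL w hwL).1 hv1
        obtain ⟨W', hW', hcntW'⟩ := splice_cycle hW hv2 hπ'
        obtain ⟨x, y, rfl⟩ := List.append_of_mem hwL
        set L' : List (List (UTrans d I) × ICfg d I) := x ++ y with hL'def
        have hperm : (x ++ w :: y).Perm (w :: L') := List.perm_middle
        have hlen' : L'.length ≤ k := by
          have : (x ++ w :: y).length = L'.length + 1 := by simp [hL'def]; omega
          omega
        have hWne' : W' ≠ [] := by
          obtain ⟨s, hs⟩ := List.exists_mem_of_ne_nil W hWne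
          have h1 : cnt W' s ≠ 0 := by
            rw [hcntW']
            have := cnt_pos_iff.1 hs
            omega
          exact List.ne_nil_of_mem (cnt_pos_iff.2 h1)
        have hmemL' : ∀ u ∈ L', u ∈ x ++ w :: y := by
          intro u hu
          rcases List.mem_append.1 hu with h | h
          · exact List.mem_append.2 (Or.inl h)
          · exact List.mem_append.2 (Or.inr (List.mem_cons_of_mem _ h))
        have hL' : ∀ u ∈ L', IsPath G.T u.1 u.2 u.2 ∧ u.1 ≠ [] :=
          fun u hu => hL u (hmemL' u hu)
        have hcov' : ∀ s ∈ G.T, s ∈ W' ∨ ∃ u ∈ L', s ∈ u.1 := by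
          intro s hs
          rcases hcov s hs with h | ⟨u, hu, hsu⟩
          · left
            apply cnt_pos_iff.2
            rw [hcntW']
            have := cnt_pos_iff.1 h
            omega
          · rcases List.mem_append.1 hu with h | h
            · exact Or.inr ⟨u, List.mem_append.2 (Or.inl h), hsu⟩
            · rcases List.mem_cons.1 h with rfl | h
              · left
                apply cnt_pos_iff.2
                rw [hcntW', hcntπ']
                have := cnt_pos_iff.1 hsu
                omega
              · exact Or.inr ⟨u, List.mem_append.2 (Or.inr h), hsu⟩
        obtain ⟨π, hπ, hcnt⟩ := ih L' W' b hlen' hW' hWne' hL' hcov'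
        refine ⟨π, hπ, fun s => ?_⟩
        rw [hcnt, hcntW', hcntπ', cntL_perm hperm, cntL_cons]
        omega
      · exfalso
        push_neg at hsh
        obtain ⟨w0, hw0L⟩ := List.exists_mem_of_ne_nil L hLnil
        have hw0 := hL w0 hw0L
        have hc0Q : w0.2 ∈ G.Q := base_mem_Q G hw0.1 hw0.2
        have hbQ : b ∈ G.Q := base_mem_Q G hW hWne
        obtain ⟨ρ, hρ⟩ := G.connected b hbQ w0.2 hc0Q
        have claim : ∀ (ρ : List (UTrans d I)) (a c : ICfg d I), IsPath G.T ρ a c →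
            a ∈ b :: W.map (fun u => u.2.2) → c ∈ b :: W.map (fun u => u.2.2) := by
          intro ρ
          induction ρ with
          | nil =>
            intro a c h ha
            exact (isPath_nil h) ▸ ha
          | cons s ρ ih2 =>
            intro a c h ha
            obtain ⟨hsT, hs1, h3⟩ := h
            rcases hcov s hsT with hsW | ⟨u, hu, hsu⟩
            · refine ih2 _ _ h3 ?_
              exact List.mem_cons.2 (Or.inr (List.mem_map_of_mem hsW))
            · have hmem : s.1 ∈ b :: W.map (fun u => u.2.2) := by rw [hs1]; exact ha
              exact absurd hmem (hsh u hu s.1 (edge_fst_mem (hL u hu).1 hsu))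
        have hend := claim ρ b w0.2 hρ (List.mem_cons_self)
        exact hsh w0 hw0L w0.2 (List.mem_cons_self) hend

end EulerHelpers5

section EulerHelpers6

variable {d : ℕ} {I : Finset (Fin d)}

lemma cntL_ne_zero {L : List (List (UTrans d I) × ICfg d I)} {s : UTrans d I}
    (h : cntL L s ≠ 0) : ∃ w ∈ L, s ∈ w.1 := by
  induction L with
  | nil => exact absurd rfl h
  | cons w L ih =>
    rw [cntL_cons] at h
    by_cases h1 : cnt w.1 s = 0
    · obtain ⟨u, hu, hsu⟩ := ih (by omega)
      exact ⟨u, List.mem_cons_of_mem _ hu, hsu⟩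
    · exact ⟨w, List.mem_cons_self, cnt_pos_iff.2 h1⟩

/-- Euler circuit: a positive balanced flow is realised by a single closed walk
starting with any prescribed transition. -/
lemma euler_circuit {A : Finset (PNAction d)} (G : Unfolding d I A) (F : UTrans d I → ℕ)
    (hsupp : ∀ s, F s ≠ 0 → s ∈ G.T) (hpos : ∀ s ∈ G.T, F s ≠ 0)
    (hbal : ∀ w, (outF G.T F w : ℤ) = (inF G.T F w : ℤ))
    (t : UTrans d I) (ht : t ∈ G.T) :
    ∃ π, IsPath G.T (t :: π) t.1 t.1 ∧ ∀ s, cnt (t :: π) s = F s := by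
  obtain ⟨L, hL, hcntL⟩ := decomp G.T (∑ s ∈ G.T, F s) F le_rfl hsupp hbal
  cases L with
  | nil =>
    exfalso
    have := hcntL t
    rw [cntL_nil] at this
    exact hpos t ht this.symm
  | cons w0 L0 =>
    have hw0 := hL w0 (List.mem_cons_self)
    have hbQ : w0.2 ∈ G.Q := base_mem_Q G hw0.1 hw0.2
    have hcov : ∀ s ∈ G.T, s ∈ w0.1 ∨ ∃ w ∈ L0, s ∈ w.1 := by
      intro s hs
      have h1 : cntL (w0 :: L0) s ≠ 0 := by rw [hcntL s]; exact hpos s hs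
      rw [cntL_cons] at h1
      by_cases h2 : cnt w0.1 s = 0
      · exact Or.inr (cntL_ne_zero (s := s) (by omega))
      · exact Or.inl (cnt_pos_iff.2 h2)
    obtain ⟨π₀, hπ₀, hcnt₀⟩ := merge_walks G L0.length L0 w0.1 w0.2 le_rfl hw0.1 hw0.2
      (fun u hu => hL u (List.mem_cons_of_mem _ hu)) hcov
    have hcntπ₀ : ∀ s, cnt π₀ s = F s := by
      intro s
      rw [hcnt₀ s, ← hcntL s, cntL_cons]
    have htπ₀ : t ∈ π₀ := cnt_pos_iff.2 (by rw [hcntπ₀ t]; exact hpos t ht)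
    obtain ⟨x, y, rfl, hx, htT', hy⟩ := mem_split_edge hπ₀ htπ₀
    refine ⟨y ++ x, ⟨htT', rfl, isPath_append hy hx⟩, ?_⟩
    intro s
    have := hcntπ₀ s
    rw [cnt_append, cnt_cons] at this
    rw [cnt_cons, cnt_append]
    omega

end EulerHelpers6

section MainHelpers

variable {d : ℕ} {I : Finset (Fin d)}

lemma closed_out_eq_in {T : Finset (UTrans d I)} {π : List (UTrans d I)} {c : ICfg d I}
    (h : IsPath T π c c) (v : ICfg d I) : outL π v = inL π v := by
  have := walk_bal h v
  omega

lemma flow_int {A : Finset (PNAction d)} (G : Unfolding d I A) (f : UTrans d I → ℚ)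
    (hfpos : ∀ t ∈ G.T, 0 < f t) :
    ∃ (N : ℕ) (F : UTrans d I → ℕ), N ≠ 0 ∧ (∀ s, F s ≠ 0 → s ∈ G.T) ∧
      (∀ s ∈ G.T, F s ≠ 0) ∧ (∀ s ∈ G.T, (F s : ℚ) = f s * N) := by
  classical
  set N : ℕ := ∏ s ∈ G.T, (f s).den with hN
  have hNne : N ≠ 0 := by
    rw [hN, Finset.prod_ne_zero_iff]
    exact fun s _ => (f s).den_nz
  refine ⟨N, fun s => if s ∈ G.T then (f s).num.toNat * (N / (f s).den) else 0, hNne, ?_, ?_, ?_⟩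
  · intro s hs
    by_contra h
    simp only [if_neg h] at hs
    exact hs rfl
  · intro s hs
    simp only [if_pos hs]
    have h1 : 0 < (f s).num := Rat.num_pos.2 (hfpos s hs)
    have h2 : (f s).den ∣ N := Finset.dvd_prod_of_mem (fun s => (f s).den) hs
    have h3 : 0 < N / (f s).den :=
      Nat.div_pos (Nat.le_of_dvd (Nat.pos_of_ne_zero hNne) h2) (f s).pos
    have h4 : (f s).num.toNat ≠ 0 := by omega
    positivity
  · intro s hs
    simp only [if_pos hs]
    have h1 : 0 < (f s).num := Rat.num_pos.2 (hfpos s hs)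
    have h2 : (f s).den ∣ N := Finset.dvd_prod_of_mem (fun s => (f s).den) hs
    have hcast : ((((f s).num.toNat : ℕ)) : ℚ) = ((f s).num : ℚ) := by
      have := Int.toNat_of_nonneg (le_of_lt h1)
      exact_mod_cast congrArg (fun z : ℤ => (z : ℚ)) this
    have hdiv : (((N / (f s).den : ℕ)) : ℚ) = (N : ℚ) / ((f s).den : ℚ) :=
      Nat.cast_div h2 (by exact_mod_cast (f s).den_nz)
    have hf : (((f s).num : ℚ)) / ((f s).den : ℚ) = f s := Rat.num_div_den (f s)
    push_cast
    rw [hcast, hdiv]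
    calc ((f s).num : ℚ) * ((N : ℚ) / ((f s).den : ℚ))
        = (((f s).num : ℚ) / ((f s).den : ℚ)) * N := by ring
      _ = f s * N := by rw [hf]

end MainHelpers

section CastHelp

variable {d : ℕ} {I : Finset (Fin d)}

lemma map_cast_sum (π : List (UTrans d I)) (i : Fin d) :
    ((π.map (fun s => disp s.2.1 i)).sum : ℚ)
      = (π.map (fun s => ((disp s.2.1 i : ℤ) : ℚ))).sum := by
  induction π with
  | nil => simp
  | cons t π ih => simp only [List.map_cons, List.sum_cons] at *; push_cast [ih]; ring

end CastHelp

/-- An `I`-unfolding `G` is structurally-reversible iff there is a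
positive rational flow `f` on its transitions which is balanced at every state and
whose total weighted displacement is zero (Euler's lemma). -/
theorem structurally_reversible_iff_flow {d : ℕ} {I : Finset (Fin d)}
    {A : Finset (PNAction d)} (G : Unfolding d I A) :
    StructRev G ↔
      ∃ f : UTrans d I → ℚ,
        (∀ t ∈ G.T, 0 < f t) ∧
        (∀ q ∈ G.Q,
          ∑ t ∈ G.T.filter (fun t => t.1 = q), f t =
            ∑ t ∈ G.T.filter (fun t => t.2.2 = q), f t) ∧
        (∑ t ∈ G.T, f t • (fun i => (disp t.2.1 i : ℚ)) = (0 : Fin d → ℚ)) := by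
  constructor
  · -- structural reversibility gives a flow
    intro hSR
    have hchoice : ∀ t : UTrans d I, ∃ π, t ∈ G.T →
        IsPath G.T π t.2.2 t.1 ∧ wdisp (plabel (t :: π)) = 0 := by
      intro t
      by_cases h : t ∈ G.T
      · obtain ⟨π, h1, h2⟩ := hSR t h
        exact ⟨π, fun _ => ⟨h1, h2⟩⟩
      · exact ⟨[], fun h' => absurd h' h⟩
    choose g hg using hchoice
    have hcyc : ∀ t ∈ G.T, IsPath G.T (t :: g t) t.1 t.1 :=
      fun t ht => ⟨ht, rfl, (hg t ht).1⟩
    have hcycmem : ∀ t ∈ G.T, ∀ s ∈ t :: g t, s ∈ G.T :=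
      fun t ht => isPath_mem (hcyc t ht)
    refine ⟨fun s => ∑ t ∈ G.T, (cnt (t :: g t) s : ℚ), ?_, ?_, ?_⟩
    · -- positivity
      intro s hs
      apply Finset.sum_pos'
      · intro t _; positivity
      · refine ⟨s, hs, ?_⟩
        have : cnt (s :: g s) s ≠ 0 := by rw [cnt_cons, if_pos rfl]; omega
        exact_mod_cast Nat.pos_of_ne_zero this
    · -- balance
      intro q _
      have key : ∀ t ∈ G.T,
          ∑ s ∈ G.T.filter (fun u => u.1 = q), (cnt (t :: g t) s : ℚ)
            = ∑ s ∈ G.T.filter (fun u => u.2.2 = q), (cnt (t :: g t) s : ℚ) := by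
        intro t ht
        have h1 := sum_cnt_filter G.T (fun s => s.1 = q) (t :: g t) (hcycmem t ht)
        have h2 := sum_cnt_filter G.T (fun s => s.2.2 = q) (t :: g t) (hcycmem t ht)
        have h3 : outL (t :: g t) q = inL (t :: g t) q := closed_out_eq_in (hcyc t ht) q
        have h4 : ∑ s ∈ G.T.filter (fun s => s.1 = q), cnt (t :: g t) s
            = ∑ s ∈ G.T.filter (fun s => s.2.2 = q), cnt (t :: g t) s := by
          rw [h1, h2]; exact h3
        exact_mod_cast h4
      calc ∑ s ∈ G.T.filter (fun u => u.1 = q), ∑ t ∈ G.T, (cnt (t :: g t) s : ℚ)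
          = ∑ t ∈ G.T, ∑ s ∈ G.T.filter (fun u => u.1 = q), (cnt (t :: g t) s : ℚ) :=
            Finset.sum_comm
        _ = ∑ t ∈ G.T, ∑ s ∈ G.T.filter (fun u => u.2.2 = q), (cnt (t :: g t) s : ℚ) :=
            Finset.sum_congr rfl key
        _ = ∑ s ∈ G.T.filter (fun u => u.2.2 = q), ∑ t ∈ G.T, (cnt (t :: g t) s : ℚ) :=
            Finset.sum_comm
    · -- zero displacement
      funext i
      rw [Finset.sum_apply]
      simp only [Pi.smul_apply, smul_eq_mul]
      have step1 : ∀ s ∈ G.T,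
          (∑ t ∈ G.T, (cnt (t :: g t) s : ℚ)) * ((disp s.2.1 i : ℤ) : ℚ)
            = ∑ t ∈ G.T, (cnt (t :: g t) s : ℚ) * ((disp s.2.1 i : ℤ) : ℚ) := by
        intro s _; rw [Finset.sum_mul]
      rw [Finset.sum_congr rfl step1, Finset.sum_comm]
      have step2 : ∀ t ∈ G.T,
          ∑ s ∈ G.T, (cnt (t :: g t) s : ℚ) * ((disp s.2.1 i : ℤ) : ℚ) = 0 := by
        intro t ht
        rw [sum_cnt_mul G.T (fun s => ((disp s.2.1 i : ℤ) : ℚ)) (t :: g t) (hcycmem t ht)]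
        have hz : wdisp (plabel (t :: g t)) i = 0 := by rw [(hg t ht).2]; rfl
        rw [pdisp_apply] at hz
        rw [← map_cast_sum, hz]
        rfl
      rw [Finset.sum_congr rfl step2, Finset.sum_const, smul_zero]
      rfl
  · -- a flow gives structural reversibility
    rintro ⟨f, hfpos, hfbal, hfzero⟩
    intro t ht
    obtain ⟨N, F, hNne, hsupp, hFpos, hFval⟩ := flow_int G f hfpos
    -- balance of the integer flow
    have hbal : ∀ v, (outF G.T F v : ℤ) = (inF G.T F v : ℤ) := by
      intro v
      have hQcast : ((outF G.T F v : ℕ) : ℚ) = ((inF G.T F v : ℕ) : ℚ) := by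
        rw [outF, inF]
        push_cast
        have ho : ∀ s ∈ G.T.filter (fun s => s.1 = v), ((F s : ℚ)) = f s * N :=
          fun s hs => hFval s (Finset.mem_filter.1 hs).1
        have hi : ∀ s ∈ G.T.filter (fun s => s.2.2 = v), ((F s : ℚ)) = f s * N :=
          fun s hs => hFval s (Finset.mem_filter.1 hs).1
        rw [Finset.sum_congr rfl ho, Finset.sum_congr rfl hi, ← Finset.sum_mul,
          ← Finset.sum_mul]
        by_cases hv : v ∈ G.Q
        · rw [hfbal v hv]
        · have h1 : G.T.filter (fun s => s.1 = v) = ∅ := by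
            apply Finset.filter_eq_empty_iff.2
            intro s hs h
            exact hv (h ▸ (G.T_mem s hs).1)
          have h2 : G.T.filter (fun s => s.2.2 = v) = ∅ := by
            apply Finset.filter_eq_empty_iff.2
            intro s hs h
            exact hv (h ▸ (G.T_mem s hs).2.2)
          rw [h1, h2]
      exact_mod_cast hQcast
    obtain ⟨π, hπ, hcnt⟩ := euler_circuit G F hsupp hFpos hbal t ht
    refine ⟨π, hπ.2.2, ?_⟩
    have hmem : ∀ s ∈ t :: π, s ∈ G.T := isPath_mem hπ
    funext i
    rw [pdisp_apply]
    have h1 : ∑ s ∈ G.T, (cnt (t :: π) s : ℤ) * disp s.2.1 i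
        = ((t :: π).map (fun s => disp s.2.1 i)).sum :=
      sum_cnt_mul G.T (fun s => disp s.2.1 i) (t :: π) hmem
    have h2 : ∑ s ∈ G.T, ((F s : ℤ)) * disp s.2.1 i = 0 := by
      have hq : ∑ s ∈ G.T, f s * ((disp s.2.1 i : ℤ) : ℚ) = 0 := by
        have := congrFun hfzero i
        rw [Finset.sum_apply] at this
        simpa [Pi.smul_apply, smul_eq_mul] using this
      have hq2 : ((∑ s ∈ G.T, ((F s : ℤ)) * disp s.2.1 i : ℤ) : ℚ) = 0 := by
        push_cast
        have : ∀ s ∈ G.T, ((F s : ℚ)) * ((disp s.2.1 i : ℤ) : ℚ)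
            = (N : ℚ) * (f s * ((disp s.2.1 i : ℤ) : ℚ)) := by
          intro s hs
          rw [hFval s hs]; ring
        rw [Finset.sum_congr rfl this, ← Finset.mul_sum, hq, mul_zero]
      exact_mod_cast hq2
    have h3 : ∀ s ∈ G.T, (cnt (t :: π) s : ℤ) * disp s.2.1 i
        = ((F s : ℤ)) * disp s.2.1 i := by
      intro s _
      rw [hcnt s]
    rw [← h1, Finset.sum_congr rfl h3, h2]
    rfl
end

section
/- Let C be an SCCC of a Petri net A and let I ⊆ {1,…,d} be such that C|_I is finite. Define the graph G_{C,I} := (Q, A, T) with Q := C|_I and T := {(x|_I, a, y|_I) : x, y ∈ C, a ∈ A, x →_a y}. Then G_{C,I} is a structurally-reversible I-unfolding of A. -/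
open scoped BigOperators

lemma fires_trans {d : ℕ} : ∀ (σ τ : List (PNAction d)) (x z y : Cfg d),
    Fires σ x z → Fires τ z y → Fires (σ ++ τ) x y := by
  intro σ
  induction σ with
  | nil =>
    intro τ x z y h1 h2
    cases h1
    simpa using h2
  | cons a σ ih =>
    rintro τ x z y ⟨w, hw, hrest⟩ h2
    exact ⟨w, hw, ih τ w z y hrest h2⟩

lemma reach_trans {d : ℕ} {A : Finset (PNAction d)} {x z y : Cfg d} :
    Reach A x z → Reach A z y → Reach A x y := by
  rintro ⟨σ, hσ, h1⟩ ⟨τ, hτ, h2⟩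
  refine ⟨σ ++ τ, ?_, fires_trans σ τ x z y h1 h2⟩
  intro a ha
  rcases List.mem_append.mp ha with h | h
  exacts [hσ a h, hτ a h]

lemma reach_refl {d : ℕ} (A : Finset (PNAction d)) (x : Cfg d) : Reach A x x :=
  ⟨[], by simp, rfl⟩

lemma wdisp_cons {d : ℕ} (a : PNAction d) (σ : List (PNAction d)) (i : Fin d) :
    wdisp (a :: σ) i = disp a i + wdisp σ i := by
  simp [wdisp]

lemma fires_disp {d : ℕ} : ∀ (σ : List (PNAction d)) (x y : Cfg d),
    Fires σ x y → ∀ i, (y i : ℤ) = (x i : ℤ) + wdisp σ i := by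
  intro σ
  induction σ with
  | nil =>
    intro x y h i
    cases h
    simp [wdisp]
  | cons a σ ih =>
    rintro x y ⟨z, ⟨c, hx, hz⟩, hrest⟩ i
    have h1 := ih z y hrest i
    have hx' : x i = a.1 i + c i := by rw [hx]; rfl
    have hz' : z i = a.2 i + c i := by rw [hz]; rfl
    rw [h1, wdisp_cons, hz', hx']
    simp [disp]
    ring

/-- For an SCCC `C` of a Petri net `A` and `I ⊆ {1,…,d}` such that
`C|_I` is finite, the graph `G_{C,I}` with states `C|_I` and transitions
`{(x|_I, a, y|_I) : x, y ∈ C, a ∈ A, x →_a y}` is a structurally-reversible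
`I`-unfolding of `A`. -/
theorem GCI_is_structurally_reversible_unfolding {d : ℕ} (A : Finset (PNAction d))
    (C : Set (Cfg d)) (hC : IsSCCC A C) (I : Finset (Fin d))
    (hfin : (restrictC I '' C).Finite) :
    ∃ G : Unfolding d I A,
      (↑G.Q = restrictC I '' C) ∧
      (↑G.T = {t : UTrans d I | t.2.1 ∈ A ∧ ∃ x ∈ C, ∃ y ∈ C,
        Step t.2.1 x y ∧ t.1 = restrictC I x ∧ t.2.2 = restrictC I y}) ∧
      StructRev G := by
  classical
  obtain ⟨c₀, hc₀⟩ := hC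
  have memC : ∀ x, x ∈ C ↔ MutualReach A c₀ x := by
    intro x; rw [hc₀]; rfl
  have hc₀C : c₀ ∈ C := (memC c₀).mpr ⟨reach_refl A c₀, reach_refl A c₀⟩
  -- mutual reachability between any two members of C
  have mutC : ∀ x ∈ C, ∀ y ∈ C, Reach A x y := by
    intro x hx y hy
    exact reach_trans ((memC x).mp hx).2 ((memC y).mp hy).1
  -- the transition set
  set S : Set (UTrans d I) := {t : UTrans d I | t.2.1 ∈ A ∧ ∃ x ∈ C, ∃ y ∈ C,
      Step t.2.1 x y ∧ t.1 = restrictC I x ∧ t.2.2 = restrictC I y} with hS_def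
  have hSfin : S.Finite := by
    apply Set.Finite.subset (Set.Finite.prod hfin (Set.Finite.prod A.finite_toSet hfin))
    rintro ⟨p, a, q⟩ ⟨ha, x, hx, y, hy, hstep, hp, hq⟩
    exact ⟨⟨x, hx, hp.symm⟩, ha, ⟨y, hy, hq.symm⟩⟩
  set Tf : Finset (UTrans d I) := hSfin.toFinset with hTf_def
  set Qf : Finset (ICfg d I) := hfin.toFinset with hQf_def
  have hTmem : ∀ t, t ∈ Tf ↔ t ∈ S := fun t => hSfin.mem_toFinset
  have hQmem : ∀ p, p ∈ Qf ↔ p ∈ restrictC I '' C := fun p => hfin.mem_toFinset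
  -- lifting words to paths
  have path_lem : ∀ σ : List (PNAction d), (∀ a ∈ σ, a ∈ A) → ∀ x ∈ C, ∀ y ∈ C,
      Fires σ x y → ∃ π, IsPath Tf π (restrictC I x) (restrictC I y) ∧ plabel π = σ := by
    intro σ
    induction σ with
    | nil =>
      intro _ x hx y hy hf
      cases hf
      exact ⟨[], rfl, rfl⟩
    | cons a σ ih =>
      rintro hmem x hx y hy ⟨z, hstep, hrest⟩
      have haA : a ∈ A := hmem a List.mem_cons_self
      have hzC : z ∈ C := by
        refine (memC z).mpr ⟨?_, ?_⟩
        · refine reach_trans ((memC x).mp hx).1 ?_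
          exact ⟨[a], by simpa using haA, ⟨z, hstep, rfl⟩⟩
        · refine reach_trans ⟨σ, fun b hb => hmem b (List.mem_cons_of_mem a hb), hrest⟩
            ((memC y).mp hy).2
      obtain ⟨π, hπ, hlab⟩ := ih (fun b hb => hmem b (List.mem_cons_of_mem a hb)) z hzC y hy hrest
      refine ⟨(restrictC I x, a, restrictC I z) :: π, ⟨?_, rfl, hπ⟩, ?_⟩
      · exact (hTmem _).mpr ⟨haA, x, hx, z, hzC, hstep, rfl, rfl⟩
      · simp [plabel] at hlab ⊢
        exact hlab
  -- the unfolding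
  refine ⟨{ Q := Qf, T := Tf
            Q_nonempty := ⟨restrictC I c₀, (hQmem _).mpr ⟨c₀, hc₀C, rfl⟩⟩
            T_mem := ?_
            T_step := ?_
            connected := ?_ }, by simp [hQf_def], by simp [hTf_def, hS_def], ?_⟩
  · rintro t ht
    obtain ⟨ha, x, hx, y, hy, hstep, hp, hq⟩ := (hTmem t).mp ht
    exact ⟨(hQmem _).mpr ⟨x, hx, hp.symm⟩, ha, (hQmem _).mpr ⟨y, hy, hq.symm⟩⟩
  · rintro t ht
    obtain ⟨ha, x, hx, y, hy, ⟨c, hxc, hyc⟩, hp, hq⟩ := (hTmem t).mp ht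
    refine ⟨restrictC I c, ?_, ?_⟩
    · rw [hp, hxc]; rfl
    · rw [hq, hyc]; rfl
  · intro p hp q hq
    obtain ⟨x, hx, hpx⟩ := (hQmem p).mp hp
    obtain ⟨y, hy, hqy⟩ := (hQmem q).mp hq
    obtain ⟨σ, hσ, hf⟩ := mutC x hx y hy
    obtain ⟨π, hπ, -⟩ := path_lem σ hσ x hx y hy hf
    rw [← hpx, ← hqy]
    exact ⟨π, hπ⟩
  · intro t ht
    obtain ⟨ha, x, hx, y, hy, hstep, hp, hq⟩ := (hTmem t).mp ht
    obtain ⟨σ, hσ, hf⟩ := mutC y hy x hx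
    obtain ⟨π, hπ, hlab⟩ := path_lem σ hσ y hy x hx hf
    refine ⟨π, by rw [hq, hp]; exact hπ, ?_⟩
    have hfire : Fires (t.2.1 :: σ) x x := ⟨y, hstep, hf⟩
    have hd := fires_disp (t.2.1 :: σ) x x hfire
    funext i
    have := hd i
    have hl : plabel (t :: π) = t.2.1 :: σ := by simp [plabel] at hlab ⊢; exact hlab
    rw [hl]
    have : wdisp (t.2.1 :: σ) i = 0 := by omega
    simpa using this
end

section
/- For every pair (p, q) of states of a strongly-connected I-unfolding G and any two paths α, β from p to q, we have Δ(α) + L_G = Δ(β) + L_G. -/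
/-!
A cycle that revisits a state splits, at the two visits, into two shorter cycles whose
displacements add up to its own; so by induction on length the displacement of every cycle lies
in `L_G`. Closing `α` and `β` with one path `γ` from `q` back to `p` then gives
`Δ(α) - Δ(β) = Δ(αγ) - Δ(βγ) ∈ L_G`.
-/

open scoped BigOperators

theorem List.exists_eq_append_cons_append_cons_of_not_nodup_map {α β : Type*} {f : α → β} :
    ∀ {l : List α}, ¬(l.map f).Nodup →
      ∃ l₁ a l₂ b l₃, l = l₁ ++ a :: (l₂ ++ b :: l₃) ∧ f a = f b
  | [], h => absurd List.nodup_nil h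
  | x :: xs, h => by
    rw [List.map_cons, List.nodup_cons, not_and_or, not_not] at h
    rcases h with hx | hxs
    · obtain ⟨y, hy, hxy⟩ := List.mem_map.mp hx
      obtain ⟨s, t, rfl⟩ := List.append_of_mem hy
      exact ⟨[], x, s, y, t, rfl, hxy.symm⟩
    · obtain ⟨l₁, a, l₂, b, l₃, rfl, hab⟩ :=
        List.exists_eq_append_cons_append_cons_of_not_nodup_map hxs
      exact ⟨x :: l₁, a, l₂, b, l₃, rfl, hab⟩

section Paths

variable {d : ℕ} {I : Finset (Fin d)} {T : Finset (UTrans d I)}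

theorem isPath_append_s5 {π ρ : List (UTrans d I)} {p q : ICfg d I} :
    IsPath T (π ++ ρ) p q ↔ ∃ s, IsPath T π p s ∧ IsPath T ρ s q := by
  induction π generalizing p with
  | nil => exact ⟨fun h => ⟨p, rfl, h⟩, fun ⟨_, rfl, h⟩ => h⟩
  | cons t π ih => simp only [List.cons_append, IsPath, ih, and_assoc, exists_and_left]

theorem IsPath.append {π ρ : List (UTrans d I)} {p s q : ICfg d I}
    (hπ : IsPath T π p s) (hρ : IsPath T ρ s q) : IsPath T (π ++ ρ) p q :=
  isPath_append_s5.mpr ⟨s, hπ, hρ⟩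

@[simp]
theorem pdisp_nil : pdisp ([] : List (UTrans d I)) = 0 := rfl

@[simp]
theorem pdisp_cons (t : UTrans d I) (π : List (UTrans d I)) :
    pdisp (t :: π) = disp t.2.1 + pdisp π := by
  simp [pdisp, plabel, wdisp]

@[simp]
theorem pdisp_append (π ρ : List (UTrans d I)) : pdisp (π ++ ρ) = pdisp π + pdisp ρ := by
  simp [pdisp, plabel, wdisp]

theorem IsPath.exists_split_of_not_nodup {π : List (UTrans d I)} {r : ICfg d I}
    (hπ : IsPath T π r r) (hdup : ¬(π.map fun t => t.2.2).Nodup) :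
    ∃ σ τ s, IsPath T σ r r ∧ IsPath T τ s s ∧
      σ.length < π.length ∧ τ.length < π.length ∧ pdisp π = pdisp σ + pdisp τ := by
  obtain ⟨π₁, t, π₂, t', π₃, rfl, hst⟩ :=
    List.exists_eq_append_cons_append_cons_of_not_nodup_map hdup
  obtain ⟨u, h₁, ht, hu, h₂₃⟩ := isPath_append_s5.mp hπ
  obtain ⟨v, h₂, ht', hv, h₃⟩ := isPath_append_s5.mp h₂₃
  refine ⟨π₁ ++ t :: π₃, π₂ ++ [t'], t.2.2, h₁.append ⟨ht, hu, hst ▸ h₃⟩,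
    h₂.append ⟨ht', hv, hst.symm⟩, by simp, by simp; omega, ?_⟩
  simp only [pdisp_append, pdisp_cons, pdisp_nil]
  abel

end Paths

section Lattice

variable {d : ℕ} {I : Finset (Fin d)} {A : Finset (PNAction d)} (G : Unfolding d I A)

theorem IsPath.source_mem_Q {π : List (UTrans d I)} {p q : ICfg d I}
    (hπ : IsPath G.T π p q) (hne : π ≠ []) : p ∈ G.Q := by
  obtain ⟨t, π, rfl⟩ := List.exists_cons_of_ne_nil hne
  obtain ⟨ht, rfl, -⟩ := hπ
  exact (G.T_mem t ht).1

theorem pdisp_mem_LG_of_cycle {π : List (UTrans d I)} {r : ICfg d I}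
    (hπ : IsPath G.T π r r) : pdisp π ∈ LG G := by
  by_cases hnil : π = []
  · simp [hnil, zero_mem]
  by_cases hsimple : (π.map fun t => t.2.2).Nodup
  · exact AddSubgroup.subset_closure
      ⟨r, hπ.source_mem_Q G hnil, π, ⟨hπ, hnil, hsimple⟩, rfl⟩
  obtain ⟨σ, τ, s, hσ, hτ, hσlen, hτlen, hsum⟩ := hπ.exists_split_of_not_nodup hsimple
  rw [hsum]
  exact add_mem (pdisp_mem_LG_of_cycle hσ) (pdisp_mem_LG_of_cycle hτ)
termination_by π.length

end Lattice

/-- For every pair `(p, q)` of states of an `I`-unfolding `G` and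
any two paths `α, β` from `p` to `q`, the cosets `Δ(α) + L_G` and `Δ(β) + L_G`
coincide. -/
theorem path_displacement_coset_independent {d : ℕ} {I : Finset (Fin d)}
    {A : Finset (PNAction d)} (G : Unfolding d I A) (p q : ICfg d I)
    (hp : p ∈ G.Q) (hq : q ∈ G.Q)
    (α β : List (UTrans d I)) (hα : IsPath G.T α p q) (hβ : IsPath G.T β p q) :
    (fun w => pdisp α + w) '' (LG G : Set (Fin d → ℤ)) =
      (fun w => pdisp β + w) '' (LG G : Set (Fin d → ℤ)) := by
  obtain ⟨γ, hγ⟩ := G.connected q hq p hp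
  have hαγ := pdisp_mem_LG_of_cycle G (hα.append hγ)
  have hβγ := pdisp_mem_LG_of_cycle G (hβ.append hγ)
  rw [pdisp_append] at hαγ hβγ
  refine (leftAddCoset_eq_iff (LG G)).mpr ?_
  simpa [neg_add_eq_sub] using sub_mem hβγ hαγ
end

section
/- Let q be a state of an I-unfolding G = (Q, A, T) of a Petri net A, let m := ‖A‖∞, r := |Q|, b := (3dm)^{(d+2)^{2d+1}}, and s := max{‖q‖∞, d·b^d·m + m·r³·(3drm)^d}. Then every minimal element of the upward-closed set U_{q,G} has infinity norm at most s. -/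
open scoped BigOperators

/-!
A minimal element `c` of `U_{q,G}` cannot have a coordinate `c i` above the bound: lowering
`c i` by one keeps `q ≤ c|_I`, and it can be carried out along both pumping runs `cm →_u c`
and `c →_v cp`, since their lengths are at most `d·b^d` and each action changes a coordinate
by at most `m`, so coordinate `i` stays above `m` throughout both runs and above the threshold
`m·r³·(3drm)^d` at their ends. The lowered configuration then lies in `U_{q,G}` below `c`.
-/

variable {d : ℕ}

lemma fst_apply_le_anorm (a : PNAction d) (i : Fin d) : a.1 i ≤ anorm a :=
  (le_max_left _ _).trans (Finset.le_sup (f := fun i => max (a.1 i) (a.2 i)) (Finset.mem_univ i))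

lemma snd_apply_le_anorm (a : PNAction d) (i : Fin d) : a.2 i ≤ anorm a :=
  (le_max_right _ _).trans (Finset.le_sup (f := fun i => max (a.1 i) (a.2 i)) (Finset.mem_univ i))

lemma Step.apply_le_add {a : PNAction d} {x y : Cfg d} {m : ℕ} (ha : anorm a ≤ m)
    (h : Step a x y) (i : Fin d) : y i ≤ x i + m ∧ x i ≤ y i + m := by
  obtain ⟨c, rfl, rfl⟩ := h
  have := fst_apply_le_anorm a i
  have := snd_apply_le_anorm a i
  simp only [Pi.add_apply]
  omega

lemma Fires.apply_le_add {m : ℕ} {σ : List (PNAction d)} {x y : Cfg d}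
    (hσ : ∀ a ∈ σ, anorm a ≤ m) (h : Fires σ x y) (i : Fin d) :
    y i ≤ x i + σ.length * m ∧ x i ≤ y i + σ.length * m := by
  induction σ generalizing x with
  | nil => cases h; simp
  | cons a σ ih =>
    obtain ⟨z, hstep, hrest⟩ := h
    have h₁ := hstep.apply_le_add (hσ a List.mem_cons_self) i
    have h₂ := ih (fun b hb => hσ b (List.mem_cons_of_mem a hb)) hrest
    simp only [List.length_cons, add_one_mul]
    omega

/-- Either side of the step certifies that the common context has at least `k` tokens in `i`. -/
lemma Step.sub_single {a : PNAction d} {x y : Cfg d} {i : Fin d} {k : ℕ} (h : Step a x y)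
    (hk : a.1 i + k ≤ x i ∨ a.2 i + k ≤ y i) :
    Step a (x - Pi.single i k) (y - Pi.single i k) := by
  obtain ⟨c, rfl, rfl⟩ := h
  simp only [Pi.add_apply] at hk
  refine ⟨c - Pi.single i k, ?_, ?_⟩ <;>
  · funext j
    rcases eq_or_ne j i with rfl | hj
    · simp only [Pi.sub_apply, Pi.add_apply, Pi.single_eq_same]
      omega
    · simp [Pi.single_eq_of_ne hj]

lemma Fires.sub_single {m : ℕ} {σ : List (PNAction d)} {x y : Cfg d} {i : Fin d} {k : ℕ}
    (hσ : ∀ a ∈ σ, anorm a ≤ m) (h : Fires σ x y)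
    (hk : σ.length * m + k ≤ x i ∨ σ.length * m + k ≤ y i) :
    Fires σ (x - Pi.single i k) (y - Pi.single i k) := by
  induction σ generalizing x with
  | nil => cases h; rfl
  | cons a σ ih =>
    obtain ⟨z, hstep, hrest⟩ := h
    have ha := hσ a List.mem_cons_self
    have hσ' : ∀ b ∈ σ, anorm b ≤ m := fun b hb => hσ b (List.mem_cons_of_mem a hb)
    have h₁ := hstep.apply_le_add ha i
    have h₂ := hrest.apply_le_add hσ' i
    have := fst_apply_le_anorm a i
    have := snd_apply_le_anorm a i
    simp only [List.length_cons, add_one_mul] at hk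
    exact ⟨z - Pi.single i k, hstep.sub_single (by omega), ih hσ' hrest (by omega)⟩

variable {I : Finset (Fin d)} {A : Finset (PNAction d)}

lemma IsPath.anorm_le_netNorm (G : Unfolding d I A) {π : List (UTrans d I)} {p p' : ICfg d I}
    (hπ : IsPath G.T π p p') : ∀ a ∈ plabel π, anorm a ≤ netNorm A := by
  induction π generalizing p with
  | nil => simp [plabel]
  | cons t π ih =>
    obtain ⟨ht, -, hrest⟩ := hπ
    simp only [plabel, List.map_cons, List.mem_cons, forall_eq_or_imp]
    exact ⟨Finset.le_sup (G.T_mem t ht).2.1, ih hrest⟩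

lemma length_le_and_anorm_le_of_label_cycle (G : Unfolding d I A) {q : ICfg d I}
    {u : List (PNAction d)} {N : ℕ} (h : ∃ α, IsPath G.T α q q ∧ plabel α = u ∧ α.length ≤ N) :
    u.length ≤ N ∧ ∀ a ∈ u, anorm a ≤ netNorm A := by
  obtain ⟨α, hα, rfl, hlen⟩ := h
  exact ⟨by simpa [plabel] using hlen, hα.anorm_le_netNorm G⟩

lemma sub_single_one_mem_UqG (G : Unfolding d I A) {q : ICfg d I} {c : Cfg d}
    (hc : c ∈ UqG G q) {i : Fin d}
    (hi : max (Finset.univ.sup q)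
        (d * (bVal d (netNorm A)) ^ d * netNorm A + thrVal d (netNorm A) G.Q.card) < c i) :
    c - Pi.single i 1 ∈ UqG G q := by
  obtain ⟨hqc, u, v, ⟨hα, hβ⟩, cm, cp, hu, hv, hthr⟩ := hc
  obtain ⟨hq_lt, hbound⟩ := max_lt_iff.mp hi
  obtain ⟨hu_len, hu_norm⟩ := length_le_and_anorm_le_of_label_cycle G hα
  obtain ⟨hv_len, hv_norm⟩ := length_le_and_anorm_le_of_label_cycle G hβ
  have hu_run : u.length * netNorm A + thrVal d (netNorm A) G.Q.card < c i :=
    lt_of_le_of_lt (by gcongr) hbound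
  have hv_run : v.length * netNorm A + thrVal d (netNorm A) G.Q.card < c i :=
    lt_of_le_of_lt (by gcongr) hbound
  have hcm := (hu.apply_le_add hu_norm i).1
  have hcp := (hv.apply_le_add hv_norm i).2
  refine ⟨fun j => ?_, u, v, ⟨hα, hβ⟩, cm - Pi.single i 1, cp - Pi.single i 1,
    hu.sub_single hu_norm (Or.inr (by omega)), hv.sub_single hv_norm (Or.inl (by omega)),
    fun j hj => ?_⟩
  · have hqj : q j ≤ Finset.univ.sup q := Finset.le_sup (Finset.mem_univ j)
    have := hqc j
    simp only [restrictC, Pi.sub_apply, Pi.single_apply] at this ⊢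
    split_ifs with hji
    · subst hji; omega
    · simpa using this
  · obtain ⟨h₁, h₂⟩ := hthr j hj
    simp only [Pi.sub_apply, Pi.single_apply]
    split_ifs with hji
    · subst hji; omega
    · simpa using ⟨h₁, h₂⟩

theorem UqG_minimal_elements_bound_general {d : ℕ} {I : Finset (Fin d)}
    {A : Finset (PNAction d)} (G : Unfolding d I A) (q : ICfg d I)
    (c : Cfg d) (hc : c ∈ UqG G q)
    (hmin : ∀ x ∈ UqG G q, x ≤ c → x = c) :
    ∀ i : Fin d,
      c i ≤ max (Finset.univ.sup q)
        (d * (bVal d (netNorm A)) ^ d * netNorm A +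
          thrVal d (netNorm A) G.Q.card) := by
  intro i
  by_contra! hi
  have hlower := congrFun (hmin _ (sub_single_one_mem_UqG G hc hi) tsub_le_self) i
  simp only [Pi.sub_apply, Pi.single_eq_same] at hlower
  omega

/-- Every minimal element of `U_{q,G}` has infinity norm bounded by
`s := max{‖q‖∞, d·b^d·m + m·r³·(3drm)^d}` where `m := ‖A‖∞`, `r := |Q|` and
`b := (3dm)^((d+2)^(2d+1))`. -/
theorem UqG_minimal_elements_bound {d : ℕ} {I : Finset (Fin d)}
    {A : Finset (PNAction d)} (G : Unfolding d I A) (q : ICfg d I) (hq : q ∈ G.Q)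
    (c : Cfg d) (hc : c ∈ UqG G q)
    (hmin : ∀ x ∈ UqG G q, x ≤ c → x = c) :
    ∀ i : Fin d,
      c i ≤ max (Finset.univ.sup q)
        (d * (bVal d (netNorm A)) ^ d * netNorm A +
          thrVal d (netNorm A) G.Q.card) :=
  UqG_minimal_elements_bound_general G q c hc hmin
end

section
/- Let z, z₁, …, z_k ∈ ℤ^d with z = z₁ + ⋯ + z_k, and let m := max_{1≤j≤k} ‖z_j‖∞. Then there exists a subset J ⊆ {1,…,k} such that z = Σ_{j∈J} z_j and |J| ≤ 2‖z‖₁·(3dm)^d. -/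
open scoped BigOperators

/-- One-norm of an integer vector. -/
def vnorm1 {d : ℕ} (v : Fin d → ℤ) : ℕ := ∑ i, (v i).natAbs

/-- Infinity norm of an integer vector. -/
def vnormInf {d : ℕ} (v : Fin d → ℤ) : ℕ := Finset.univ.sup fun i => (v i).natAbs

namespace SubsetSumAux

lemma coord_le {d m : ℕ} {x : Fin d → ℤ} (hx : vnormInf x ≤ m) (c : Fin d) :
    (x c).natAbs ≤ m :=
  le_trans (Finset.le_sup (f := fun i => (x i).natAbs) (Finset.mem_univ c)) hx

/-- The Steinitz invariant: fractional coefficients on `A` with total mass `r - d`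
whose combination of the `x i` vanishes. -/
def Inv {ι : Type*} (d : ℕ) (x : ι → Fin d → ℤ) (A : Finset ι) (r : ℕ) : Prop :=
  ∃ l : ι → ℝ, (∀ i ∈ A, 0 ≤ l i ∧ l i ≤ 1) ∧ (∑ i ∈ A, l i) = (r : ℝ) - d ∧
    ∀ c, ∑ i ∈ A, l i * (x i c : ℝ) = 0

lemma remove_step {ι : Type*} [DecidableEq ι] {d : ℕ} (x : ι → Fin d → ℤ) (A : Finset ι)
    (t : ℕ) (hA : A.card = t + 1) (hd : d ≤ t) (h : Inv d x A (t + 1)) :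
    ∃ a ∈ A, Inv d x (A.erase a) t := by
  classical
  obtain ⟨l0, hl0b, hl0s, hl0x⟩ := h
  have hdt : (d : ℝ) ≤ t := by exact_mod_cast hd
  have hden : (0:ℝ) < (t:ℝ) + 1 - d := by linarith
  set Q : (ι → ℝ) → Prop := fun l =>
    (∀ i ∈ A, 0 ≤ l i ∧ l i ≤ 1) ∧ (∑ i ∈ A, l i) = (t : ℝ) - d ∧
      ∀ c, ∑ i ∈ A, l i * (x i c : ℝ) = 0 with hQdef
  set cf : ℝ := ((t:ℝ) - d) / ((t:ℝ) + 1 - d) with hcf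
  have hcf0 : 0 ≤ cf := div_nonneg (by linarith) hden.le
  have hcf1 : cf ≤ 1 := by rw [div_le_one hden]; linarith
  have hl0s' : (∑ i ∈ A, l0 i) = (t:ℝ) + 1 - d := by rw [hl0s]; push_cast; ring
  have hQ0 : Q (fun i => cf * l0 i) := by
    refine ⟨fun i hi => ⟨mul_nonneg hcf0 (hl0b i hi).1, ?_⟩, ?_, fun c => ?_⟩
    · calc cf * l0 i ≤ cf * 1 := mul_le_mul_of_nonneg_left (hl0b i hi).2 hcf0
        _ ≤ 1 := by linarith
    · rw [← Finset.mul_sum, hl0s', hcf, div_mul_cancel₀ _ hden.ne']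
    · calc ∑ i ∈ A, cf * l0 i * (x i c : ℝ) = cf * ∑ i ∈ A, l0 i * (x i c : ℝ) := by
            rw [Finset.mul_sum]; exact Finset.sum_congr rfl fun i _ => by ring
        _ = 0 := by rw [hl0x c, mul_zero]
  set N : (ι → ℝ) → ℕ := fun l => (A.filter fun i => l i = 0 ∨ l i = 1).card with hN
  set V : Set ℕ := {n | ∃ l, Q l ∧ N l = n} with hV
  have hVne : V.Nonempty := ⟨_, _, hQ0, rfl⟩
  have hVbdd : BddAbove V := by
    refine ⟨A.card, fun n hn => ?_⟩
    obtain ⟨l, _, hl⟩ := hn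
    rw [← hl]
    exact Finset.card_filter_le _ _
  obtain ⟨l, hQl, hNl⟩ : ∃ l, Q l ∧ N l = sSup V := Nat.sSup_mem hVne hVbdd
  have hmax : ∀ l', Q l' → N l' ≤ N l := fun l' h' => by
    rw [hNl]; exact le_csSup hVbdd ⟨l', h', rfl⟩
  have hzero : ∃ i₀ ∈ A, l i₀ = 0 := by
    by_contra hno
    push_neg at hno
    set F : Finset ι := A.filter (fun i => l i ≠ 0 ∧ l i ≠ 1) with hF
    have hFsub : F ⊆ A := Finset.filter_subset _ _
    have hFopen : ∀ i ∈ F, 0 < l i ∧ l i < 1 := by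
      intro i hi
      obtain ⟨hiA, hne⟩ := Finset.mem_filter.mp hi
      have hb := hQl.1 i hiA
      exact ⟨lt_of_le_of_ne hb.1 (Ne.symm hne.1), lt_of_le_of_ne hb.2 hne.2⟩
    have hFcard : F.card ≤ d + 1 := by
      by_contra hFc
      push_neg at hFc
      have hdep : ¬ LinearIndependent ℝ
          (fun a : F => (Fin.cons 1 (fun c => (x a.1 c : ℝ)) : Fin (d+1) → ℝ)) := by
        intro hli
        have hle := hli.fintype_card_le_finrank
        rw [Module.finrank_pi, Fintype.card_coe, Fintype.card_fin] at hle
        omega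
      obtain ⟨g, hg0, i₁, hgi₁⟩ := Fintype.not_linearIndependent_iff.mp hdep
      set μ : ι → ℝ := fun i => if hi : i ∈ F then g ⟨i, hi⟩ else 0 with hμ
      have hμF : ∀ i ∉ F, μ i = 0 := fun i hi => dif_neg hi
      have hgsum0 : ∑ a ∈ F.attach, g a = 0 := by
        have h0 := congrFun hg0 0
        simpa [Finset.sum_apply, Finset.univ_eq_attach, Fin.cons_zero] using h0
      have hgsumx : ∀ c : Fin d, ∑ a ∈ F.attach, g a * (x a.1 c : ℝ) = 0 := by
        intro c
        have h0 := congrFun hg0 c.succ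
        simpa [Finset.sum_apply, Finset.univ_eq_attach, Fin.cons_succ] using h0
      have hμattach : ∀ (φ : ι → ℝ), ∑ i ∈ A, μ i * φ i = ∑ a ∈ F.attach, g a * φ a.1 := by
        intro φ
        rw [← Finset.sum_subset hFsub (fun i _ hi => by rw [hμF i hi, zero_mul])]
        rw [← Finset.sum_attach F (fun i => μ i * φ i)]
        refine Finset.sum_congr rfl fun a _ => ?_
        rw [hμ]; simp only [a.2, dif_pos]
      have hμ0 : ∑ i ∈ A, μ i = 0 := by
        have h1 := hμattach (fun _ => 1)
        simpa [hgsum0] using h1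
      have hμx : ∀ c, ∑ i ∈ A, μ i * (x i c : ℝ) = 0 := by
        intro c
        rw [hμattach (fun i => (x i c : ℝ))]
        exact hgsumx c
      set T : Finset ι := F.filter (fun i => μ i ≠ 0) with hT
      have hTne : T.Nonempty := by
        refine ⟨i₁.1, Finset.mem_filter.mpr ⟨i₁.2, ?_⟩⟩
        rw [hμ]; simpa [dif_pos i₁.2] using hgi₁
      set step : ι → ℝ := fun i => if 0 < μ i then (1 - l i) / μ i else l i / (-μ i) with hstep
      have hstepdef : ∀ i, step i = if 0 < μ i then (1 - l i) / μ i else l i / (-μ i) :=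
        fun i => rfl
      set sm := T.inf' hTne step with hsm
      have hTF : T ⊆ F := Finset.filter_subset _ _
      have hstep_pos : ∀ i ∈ T, 0 < step i := by
        intro i hiT
        obtain ⟨hiF, hiμ⟩ := Finset.mem_filter.mp hiT
        obtain ⟨h01, h02⟩ := hFopen i hiF
        rw [hstepdef i]
        by_cases hμi : 0 < μ i
        · rw [if_pos hμi]; exact div_pos (by linarith) hμi
        · rw [if_neg hμi]
          have hlt : μ i < 0 := lt_of_le_of_ne (not_lt.mp hμi) hiμ
          exact div_pos h01 (by linarith)
      have hsm_pos : 0 < sm := (Finset.lt_inf'_iff hTne).mpr hstep_pos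
      set l' : ι → ℝ := fun i => l i + sm * μ i with hl'
      have hl'def : ∀ i, l' i = l i + sm * μ i := fun i => rfl
      have hfix : ∀ i, μ i = 0 → l' i = l i := by
        intro i h0; rw [hl'def i, h0, mul_zero, add_zero]
      have hl'Q : Q l' := by
        refine ⟨?_, ?_, ?_⟩
        · intro i hi
          by_cases hμi : μ i = 0
          · rw [hfix i hμi]; exact hQl.1 i hi
          · have hiF : i ∈ F := by
              by_contra hiF
              exact hμi (hμF i hiF)
            have hiT : i ∈ T := Finset.mem_filter.mpr ⟨hiF, hμi⟩
            have hs_le : sm ≤ step i := Finset.inf'_le _ hiT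
            obtain ⟨h01, h02⟩ := hFopen i hiF
            rcases lt_or_gt_of_ne hμi with hneg | hpos
            · have hstepi : step i = l i / (-μ i) := by
                rw [hstepdef i, if_neg (not_lt.mpr hneg.le)]
              have hμne : (-μ i) ≠ 0 := neg_ne_zero.mpr hμi
              have hkey : step i * μ i = -(l i) := by
                rw [hstepi]
                field_simp
              constructor
              · have hh : step i * μ i ≤ sm * μ i := mul_le_mul_of_nonpos_right hs_le hneg.le
                rw [hkey] at hh
                rw [hl'def i]; linarith
              · have hh : sm * μ i ≤ 0 := mul_nonpos_of_nonneg_of_nonpos hsm_pos.le hneg.le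
                rw [hl'def i]; linarith
            · have hstepi : step i = (1 - l i) / μ i := by rw [hstepdef i, if_pos hpos]
              have hkey : step i * μ i = 1 - l i := by
                rw [hstepi]
                field_simp
              constructor
              · have hh : 0 ≤ sm * μ i := mul_nonneg hsm_pos.le hpos.le
                rw [hl'def i]; linarith
              · have hh : sm * μ i ≤ step i * μ i := mul_le_mul_of_nonneg_right hs_le hpos.le
                rw [hkey] at hh
                rw [hl'def i]; linarith
        · have : ∑ i ∈ A, l' i = ∑ i ∈ A, l i + sm * ∑ i ∈ A, μ i := by
            rw [Finset.mul_sum, ← Finset.sum_add_distrib]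
          rw [this, hμ0, mul_zero, add_zero]
          exact hQl.2.1
        · intro c
          have : ∑ i ∈ A, l' i * (x i c : ℝ)
              = ∑ i ∈ A, l i * (x i c : ℝ) + sm * ∑ i ∈ A, μ i * (x i c : ℝ) := by
            rw [Finset.mul_sum, ← Finset.sum_add_distrib]
            exact Finset.sum_congr rfl fun i _ => by rw [hl']; ring
          rw [this, hμx c, mul_zero, add_zero]
          exact hQl.2.2 c
      have hNlt : N l < N l' := by
        obtain ⟨i₂, hi₂T, hi₂eq⟩ := Finset.exists_mem_eq_inf' hTne step
        obtain ⟨hi₂F, hi₂μ⟩ := Finset.mem_filter.mp hi₂T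
        have hi₂A : i₂ ∈ A := hFsub hi₂F
        have hsub : (A.filter fun i => l i = 0 ∨ l i = 1) ⊆
            (A.filter fun i => l' i = 0 ∨ l' i = 1) := by
          intro i hi
          obtain ⟨hiA, hi01⟩ := Finset.mem_filter.mp hi
          have hiF : i ∉ F := by
            intro hiF
            obtain ⟨h1, h2⟩ := (Finset.mem_filter.mp hiF).2
            rcases hi01 with h | h
            · exact h1 h
            · exact h2 h
          rw [Finset.mem_filter]
          exact ⟨hiA, by rw [hfix i (hμF i hiF)]; exact hi01⟩
        have hi₂mem : i₂ ∈ (A.filter fun i => l' i = 0 ∨ l' i = 1) := by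
          rw [Finset.mem_filter]
          refine ⟨hi₂A, ?_⟩
          have hsmi : sm = step i₂ := by rw [hsm, hi₂eq]
          rcases lt_or_gt_of_ne hi₂μ with hneg | hpos
          · left
            have hμne : (-μ i₂) ≠ 0 := neg_ne_zero.mpr hi₂μ
            have hsmi' : sm = l i₂ / (-μ i₂) := by
              rw [hsmi, hstepdef i₂, if_neg (not_lt.mpr hneg.le)]
            rw [hl'def i₂, hsmi']
            field_simp
            ring
          · right
            have hsmi' : sm = (1 - l i₂) / μ i₂ := by
              rw [hsmi, hstepdef i₂, if_pos hpos]
            rw [hl'def i₂, hsmi', div_mul_cancel₀ _ (ne_of_gt hpos)]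
            ring
        have hi₂no : i₂ ∉ (A.filter fun i => l i = 0 ∨ l i = 1) := by
          rw [Finset.mem_filter]
          rintro ⟨-, h | h⟩
          · exact (Finset.mem_filter.mp hi₂F).2.1 h
          · exact (Finset.mem_filter.mp hi₂F).2.2 h
        refine Finset.card_lt_card ⟨hsub, fun hsup => hi₂no (hsup hi₂mem)⟩
      exact absurd (hmax l' hl'Q) (not_le.mpr hNlt)
    -- now F.card ≤ d + 1 and no zero coordinates: contradiction
    have hone : ∀ i ∈ A \ F, l i = 1 := by
      intro i hi
      obtain ⟨hiA, hiF⟩ := Finset.mem_sdiff.mp hi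
      by_contra h1
      exact hiF (Finset.mem_filter.mpr ⟨hiA, hno i hiA, h1⟩)
    have hsplit : ∑ i ∈ A \ F, l i + ∑ i ∈ F, l i = (t:ℝ) - d := by
      rw [Finset.sum_sdiff hFsub]; exact hQl.2.1
    have hFA : F.card ≤ A.card := Finset.card_le_card hFsub
    have h1 : ∑ i ∈ A \ F, l i = ((t:ℝ) + 1) - F.card := by
      rw [Finset.sum_congr rfl hone, Finset.sum_const, nsmul_eq_mul, mul_one,
        Finset.card_sdiff_of_subset hFsub, Nat.cast_sub hFA, hA]
      push_cast
      ring
    rcases F.eq_empty_or_nonempty with hFe | hFne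
    · rw [hFe] at hsplit h1
      simp only [Finset.sum_empty, add_zero, Finset.card_empty, Nat.cast_zero, sub_zero] at hsplit h1
      rw [h1] at hsplit
      have : (0:ℝ) ≤ d := Nat.cast_nonneg d
      linarith
    · have hpos : 0 < ∑ i ∈ F, l i := Finset.sum_pos (fun i hi => (hFopen i hi).1) hFne
      have hcF : (F.card : ℝ) ≤ (d:ℝ) + 1 := by exact_mod_cast hFcard
      linarith
  obtain ⟨i₀, hi₀A, hi₀⟩ := hzero
  refine ⟨i₀, hi₀A, l, fun i hi => hQl.1 i (Finset.mem_of_mem_erase hi), ?_, fun c => ?_⟩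
  · rw [Finset.sum_erase _ hi₀]
    exact hQl.2.1
  · rw [show (∑ i ∈ A.erase i₀, l i * (x i c : ℝ)) = ∑ i ∈ A, l i * (x i c : ℝ) from
      Finset.sum_erase A (by rw [hi₀, zero_mul])]
    exact hQl.2.2 c

lemma sum_coord_natAbs_le {ι : Type*} {d m : ℕ} (x : ι → Fin d → ℤ)
    (hx : ∀ i, vnormInf (x i) ≤ m) (A : Finset ι) (c : Fin d) :
    ((∑ i ∈ A, x i) c).natAbs ≤ A.card * m := by
  rw [Finset.sum_apply]
  have h1 : |∑ i ∈ A, x i c| ≤ (A.card * m : ℤ) := by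
    refine le_trans (Finset.abs_sum_le_sum_abs _ _) ?_
    calc ∑ i ∈ A, |x i c| ≤ ∑ _i ∈ A, (m : ℤ) := by
          refine Finset.sum_le_sum fun i _ => ?_
          have := coord_le (hx i) c
          rw [Int.abs_eq_natAbs]
          exact_mod_cast this
      _ = (A.card * m : ℤ) := by rw [Finset.sum_const, nsmul_eq_mul]
  rw [Int.abs_eq_natAbs] at h1
  exact_mod_cast h1

lemma inv_bound {ι : Type*} {d m : ℕ} (x : ι → Fin d → ℤ)
    (hx : ∀ i, vnormInf (x i) ≤ m) (A : Finset ι) (r : ℕ) (hcard : A.card = r)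
    (h : Inv d x A r) (c : Fin d) :
    ((∑ i ∈ A, x i) c).natAbs ≤ d * m := by
  obtain ⟨l, hb, hs, hxc⟩ := h
  rw [Finset.sum_apply]
  have key : |((∑ i ∈ A, x i c : ℤ) : ℝ)| ≤ (d : ℝ) * m := by
    have e1 : ((∑ i ∈ A, x i c : ℤ) : ℝ) = ∑ i ∈ A, (1 - l i) * (x i c : ℝ) := by
      have e2 : ∑ i ∈ A, (1 - l i) * (x i c : ℝ)
          = ∑ i ∈ A, (x i c : ℝ) - ∑ i ∈ A, l i * (x i c : ℝ) := by
        rw [← Finset.sum_sub_distrib]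
        exact Finset.sum_congr rfl fun i _ => by ring
      rw [e2, hxc c, sub_zero]
      push_cast
      rfl
    rw [e1]
    refine le_trans (Finset.abs_sum_le_sum_abs _ _) ?_
    have hb1 : ∀ i ∈ A, |(1 - l i) * (x i c : ℝ)| ≤ (1 - l i) * m := by
      intro i hi
      rw [abs_mul]
      have h1 : 0 ≤ 1 - l i := by linarith [(hb i hi).2]
      rw [abs_of_nonneg h1]
      refine mul_le_mul_of_nonneg_left ?_ h1
      have h2 := coord_le (hx i) c
      have h3 : |(x i c : ℝ)| = ((x i c).natAbs : ℝ) := by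
        rw [Nat.cast_natAbs]
        push_cast
        ring
      rw [h3]
      exact_mod_cast h2
    refine le_trans (Finset.sum_le_sum hb1) ?_
    have e3 : ∑ i ∈ A, ((1:ℝ) - l i) * m = ((A.card : ℝ) - ((r:ℝ) - d)) * m := by
      rw [← Finset.sum_mul]
      congr 1
      rw [Finset.sum_sub_distrib, hs, Finset.sum_const, nsmul_eq_mul, mul_one]
    rw [e3, hcard]
    have : ((r:ℝ) - ((r:ℝ) - d)) = (d:ℝ) := by ring
    rw [this]
  have h4 : ((∑ i ∈ A, x i c).natAbs : ℝ) ≤ ((d * m : ℕ) : ℝ) := by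
    rw [Nat.cast_natAbs]
    push_cast
    push_cast at key
    exact key
  exact_mod_cast h4

lemma down {ι : Type*} [Fintype ι] [DecidableEq ι] {d : ℕ} (x : ι → Fin d → ℤ)
    (hsum : ∀ c, ∑ i, (x i c : ℝ) = 0) :
    ∀ j, j ≤ Fintype.card ι → ∃ C : ℕ → Finset ι, C 0 = Finset.univ ∧
      (∀ i, i < j → C (i + 1) ⊆ C i) ∧
      (∀ i, i ≤ j → (C i).card = Fintype.card ι - i) ∧
      (∀ i, i ≤ j → d + i ≤ Fintype.card ι → Inv d x (C i) (Fintype.card ι - i)) := by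
  intro j
  induction j with
  | zero =>
    intro _
    refine ⟨fun _ => Finset.univ, rfl, fun i hi => absurd hi (Nat.not_lt_zero i), ?_, ?_⟩
    · intro i hi
      have : i = 0 := Nat.le_zero.mp hi
      subst this
      simp [Finset.card_univ]
    · intro i hi hdi
      have hi0 : i = 0 := Nat.le_zero.mp hi
      subst hi0
      rw [Nat.add_zero] at hdi
      rcases Nat.eq_zero_or_pos (Fintype.card ι) with hn | hn
      · have hd0 : d = 0 := by omega
        refine ⟨fun _ => 0, fun i _ => by norm_num, ?_, fun c => ?_⟩
        · have : Finset.univ = (∅ : Finset ι) := by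
            rw [← Finset.card_eq_zero, Finset.card_univ, hn]
          rw [this, Finset.sum_empty, Nat.sub_zero, hn, hd0]
          norm_num
        · simp
      · set n := Fintype.card ι
        have hn0 : ((n:ℝ)) ≠ 0 := by positivity
        have hdn : (d:ℝ) ≤ n := by exact_mod_cast hdi
        refine ⟨fun _ => ((n:ℝ) - d) / n, fun i _ => ?_, ?_, fun c => ?_⟩
        · constructor
          · apply div_nonneg (by linarith) (by positivity)
          · rw [div_le_one (by positivity)]; linarith
        · rw [Finset.sum_const, Finset.card_univ, nsmul_eq_mul]
          rw [Nat.sub_zero]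
          field_simp
          rfl
        · rw [← Finset.mul_sum, hsum c, mul_zero]
  | succ j ih =>
    intro hj1
    obtain ⟨C, hC0, hCsub, hCcard, hCinv⟩ := ih (by omega)
    have hAcard : (C j).card = Fintype.card ι - j := hCcard j le_rfl
    have hB : ∃ B : Finset ι, B ⊆ C j ∧ B.card = Fintype.card ι - (j + 1) ∧
        (d + (j + 1) ≤ Fintype.card ι → Inv d x B (Fintype.card ι - (j + 1))) := by
      by_cases hcase : d + (j + 1) ≤ Fintype.card ι
      · have hinvA : Inv d x (C j) (Fintype.card ι - j) := hCinv j le_rfl (by omega)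
        have h1 : Fintype.card ι - j = (Fintype.card ι - (j + 1)) + 1 := by omega
        rw [h1] at hinvA
        obtain ⟨a, haA, hinvB⟩ := remove_step x (C j) (Fintype.card ι - (j + 1))
          (by omega) (by omega) hinvA
        refine ⟨(C j).erase a, Finset.erase_subset _ _, ?_, fun _ => hinvB⟩
        rw [Finset.card_erase_of_mem haA]
        omega
      · have hne : (C j).Nonempty := Finset.card_pos.mp (by omega)
        obtain ⟨a, haA⟩ := hne
        refine ⟨(C j).erase a, Finset.erase_subset _ _, ?_, fun h => absurd h hcase⟩
        rw [Finset.card_erase_of_mem haA]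
        omega
    obtain ⟨B, hBsub, hBcard, hBinv⟩ := hB
    refine ⟨fun i => if i ≤ j then C i else B,
      by dsimp only; rw [if_pos (Nat.zero_le j)]; exact hC0, ?_, ?_, ?_⟩
    · intro i hi
      dsimp only
      by_cases h1 : i + 1 ≤ j
      · rw [if_pos h1, if_pos (by omega)]
        exact hCsub i (by omega)
      · have hij : i = j := by omega
        subst hij
        rw [if_neg h1, if_pos le_rfl]
        exact hBsub
    · intro i hi
      dsimp only
      by_cases h1 : i ≤ j
      · rw [if_pos h1]; exact hCcard i h1
      · have hij : i = j + 1 := by omega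
        subst hij
        rw [if_neg h1]; exact hBcard
    · intro i hi hdi
      dsimp only
      by_cases h1 : i ≤ j
      · rw [if_pos h1]; exact hCinv i h1 hdi
      · have hij : i = j + 1 := by omega
        subst hij
        rw [if_neg h1]; exact hBinv hdi

lemma chain_exists {ι : Type*} [Fintype ι] [DecidableEq ι] {d m : ℕ} (x : ι → Fin d → ℤ)
    (hx : ∀ i, vnormInf (x i) ≤ m) (hsum : ∑ i, x i = 0) :
    ∃ S : ℕ → Finset ι, (∀ r, S r ⊆ S (r + 1)) ∧
      (∀ r, r ≤ Fintype.card ι → (S r).card = r) ∧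
      ∀ r c, ((∑ i ∈ S r, x i) c).natAbs ≤ d * m := by
  classical
  have hsumc : ∀ c, ∑ i, (x i c : ℝ) = 0 := by
    intro c
    have h1 : ∑ i, x i c = 0 := by
      have h2 := congrFun hsum c
      rw [Finset.sum_apply] at h2
      exact h2
    have h3 : ((∑ i, x i c : ℤ) : ℝ) = 0 := by rw [h1]; norm_num
    rw [← h3]
    push_cast
    rfl
  set n := Fintype.card ι with hn
  obtain ⟨C, hC0, hCsub, hCcard, hCinv⟩ := down x hsumc n le_rfl
  refine ⟨fun r => C (n - r), ?_, ?_, ?_⟩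
  · intro r
    dsimp only
    rcases le_or_gt n r with h | h
    · rw [show n - r = 0 from by omega, show n - (r + 1) = 0 from by omega]
    · rw [show n - r = (n - (r + 1)) + 1 from by omega]
      exact hCsub (n - (r + 1)) (by omega)
  · intro r hr
    dsimp only
    rw [hCcard (n - r) (by omega)]
    omega
  · intro r c
    dsimp only
    rcases le_or_gt n r with h | h
    · rw [show n - r = 0 from by omega, hC0]
      have h2 : (∑ i ∈ Finset.univ, x i) = 0 := hsum
      rw [h2]
      simp
    · by_cases hdr : d ≤ r
      · have hinv := hCinv (n - r) (by omega) (by omega)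
        have hcard := hCcard (n - r) (by omega)
        rw [show n - (n - r) = r from by omega] at hinv hcard
        exact inv_bound x hx _ r hcard hinv c
      · have hcard := hCcard (n - r) (by omega)
        rw [show n - (n - r) = r from by omega] at hcard
        calc ((∑ i ∈ C (n - r), x i) c).natAbs ≤ (C (n - r)).card * m :=
              sum_coord_natAbs_le x hx _ c
          _ ≤ d * m := by rw [hcard]; exact Nat.mul_le_mul_right m (by omega)

end SubsetSumAux

open SubsetSumAux in
/-- If `z = z₁ + ⋯ + z_k` then some subset `J ⊆ {1,…,k}` sums to
`z` with `|J| ≤ 2‖z‖₁ · (3dm)^d`, where `m = max_j ‖z_j‖∞`. -/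
theorem subset_sum_extraction {d k : ℕ} (z : Fin d → ℤ) (f : Fin k → Fin d → ℤ)
    (hz : z = ∑ j, f j) :
    ∃ J : Finset (Fin k),
      z = ∑ j ∈ J, f j ∧
      J.card ≤ 2 * vnorm1 z *
        (3 * d * (Finset.univ.sup fun j => vnormInf (f j))) ^ d := by
  classical
  by_cases hz0 : z = 0
  · refine ⟨∅, ?_, by simp⟩
    rw [hz0, Finset.sum_empty]
  set M := Finset.univ.sup fun j => vnormInf (f j) with hM
  set s := vnorm1 z with hs
  obtain ⟨J₀, hJ₀mem, hJ₀min⟩ := Finset.exists_min_image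
    (Finset.univ.filter (fun J : Finset (Fin k) => ∑ j ∈ J, f j = z)) Finset.card
    ⟨Finset.univ, Finset.mem_filter.mpr ⟨Finset.mem_univ _, hz.symm⟩⟩
  have hJ₀sum : ∑ j ∈ J₀, f j = z := (Finset.mem_filter.mp hJ₀mem).2
  have hmin : ∀ J : Finset (Fin k), ∑ j ∈ J, f j = z → J₀.card ≤ J.card := fun J hJ =>
    hJ₀min J (Finset.mem_filter.mpr ⟨Finset.mem_univ _, hJ⟩)
  refine ⟨J₀, hJ₀sum.symm, ?_⟩
  have hzsf : ∀ S ⊆ J₀, S.Nonempty → ∑ j ∈ S, f j ≠ 0 := by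
    intro S hS hSne hS0
    have h2 := Finset.sum_sdiff (f := f) hS
    rw [hJ₀sum, hS0, add_zero] at h2
    have h3 := hmin _ h2
    have h4 : S.card ≤ J₀.card := Finset.card_le_card hS
    have h5 : (J₀ \ S).card = J₀.card - S.card := Finset.card_sdiff_of_subset hS
    have h6 : 0 < S.card := Finset.card_pos.mpr hSne
    omega
  have hd0 : d ≠ 0 := by
    rintro rfl
    exact hz0 (funext fun c => c.elim0)
  have hM1 : 1 ≤ M := by
    rcases Nat.eq_zero_or_pos M with h0 | h1
    · exfalso
      apply hz0
      rw [hz]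
      refine Finset.sum_eq_zero fun j _ => funext fun c => ?_
      have h2 : vnormInf (f j) ≤ M :=
        Finset.le_sup (f := fun j => vnormInf (f j)) (Finset.mem_univ j)
      have h3 := coord_le (le_trans h2 (le_of_eq h0)) c
      have h4 : f j c = 0 := by omega
      exact h4
    · exact h1
  have hs1 : 1 ≤ s := by
    rcases Nat.eq_zero_or_pos s with h0 | h1
    · exfalso
      apply hz0
      funext c
      have h2 : vnorm1 z = 0 := by rw [← hs]; exact h0
      unfold vnorm1 at h2
      have h3 := (Finset.sum_eq_zero_iff).mp h2 c (Finset.mem_univ c)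
      have h4 : z c = 0 := by omega
      exact h4
    · exact h1
  -- the combined family of vectors
  set x : ({j // j ∈ J₀} ⊕ (Σ i : Fin d, Fin (z i).natAbs)) → Fin d → ℤ :=
    Sum.elim (fun j => f j.1) (fun p => Pi.single p.1 (-(z p.1).sign)) with hxdef
  have hL : ∀ j, x (Sum.inl j) = f j.1 := fun _ => rfl
  have hR : ∀ p, x (Sum.inr p) = Pi.single p.1 (-(z p.1).sign) := fun _ => rfl
  have hxm : ∀ i, vnormInf (x i) ≤ M := by
    rintro (j | p)
    · rw [hL]
      exact Finset.le_sup (f := fun j => vnormInf (f j)) (Finset.mem_univ j.1)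
    · rw [hR]
      refine le_trans ?_ hM1
      refine Finset.sup_le fun c _ => ?_
      rw [Pi.single_apply]
      by_cases hc : c = p.1
      · rw [if_pos hc, Int.natAbs_neg]
        by_cases h0 : z p.1 = 0
        · rw [h0, Int.sign_zero]; norm_num
        · rw [Int.natAbs_sign_of_ne_zero h0]
      · rw [if_neg hc]; norm_num
  have hxsum : ∑ i, x i = 0 := by
    funext c
    rw [Finset.sum_apply, Pi.zero_apply, Fintype.sum_sum_type]
    have hleft : ∑ j : {j // j ∈ J₀}, x (Sum.inl j) c = z c := by
      have h1 : ∑ j : {j // j ∈ J₀}, f j.1 c = ∑ j ∈ J₀, f j c :=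
        Finset.sum_coe_sort J₀ (fun j => f j c)
      calc ∑ j : {j // j ∈ J₀}, x (Sum.inl j) c = ∑ j ∈ J₀, f j c := h1
        _ = (∑ j ∈ J₀, f j) c := (Finset.sum_apply _ _ _).symm
        _ = z c := by rw [hJ₀sum]
    have hright : ∑ p : (Σ i : Fin d, Fin (z i).natAbs), x (Sum.inr p) c = -(z c) := by
      calc ∑ p : (Σ i : Fin d, Fin (z i).natAbs), x (Sum.inr p) c
          = ∑ i : Fin d, ∑ _q : Fin (z i).natAbs, Pi.single i (-(z i).sign) c := by
            rw [← Finset.univ_sigma_univ, Finset.sum_sigma]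
            exact Finset.sum_congr rfl fun i _ => Finset.sum_congr rfl fun q _ =>
              congrFun (hR ⟨i, q⟩) c
        _ = ∑ i : Fin d, ((z i).natAbs : ℤ) * (if c = i then -(z i).sign else 0) := by
            refine Finset.sum_congr rfl fun i _ => ?_
            rw [Finset.sum_const, Finset.card_univ, Fintype.card_fin, nsmul_eq_mul,
              Pi.single_apply]
        _ = ∑ i : Fin d, (if c = i then ((z i).natAbs : ℤ) * (-(z i).sign) else 0) := by
            refine Finset.sum_congr rfl fun i _ => ?_
            rw [mul_ite, mul_zero]
        _ = ((z c).natAbs : ℤ) * (-(z c).sign) := by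
            rw [Finset.sum_ite_eq, if_pos (Finset.mem_univ c)]
        _ = -(z c) := by
            have h5 : (z c).sign * ((z c).natAbs : ℤ) = z c := Int.sign_mul_natAbs (z c)
            linear_combination -h5
    rw [hleft, hright]
    omega
  set n := Fintype.card ({j // j ∈ J₀} ⊕ (Σ i : Fin d, Fin (z i).natAbs)) with hn
  have hcardn : n = J₀.card + s := by
    rw [hn, Fintype.card_sum, Fintype.card_coe, Fintype.card_sigma]
    simp only [Fintype.card_fin]
    rw [hs]
    rfl
  set D := d * M with hD
  have hD1 : 1 ≤ D := by
    rw [hD]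
    exact Nat.one_le_iff_ne_zero.mpr (Nat.mul_ne_zero hd0 (by omega))
  obtain ⟨S, hSsub, hScard, hSnorm⟩ := chain_exists x hxm hxsum
  have hmono : ∀ a b : ℕ, a ≤ b → S a ⊆ S b := fun a b h =>
    monotone_nat_of_le_succ hSsub h
  set R : Finset ({j // j ∈ J₀} ⊕ (Σ i : Fin d, Fin (z i).natAbs)) :=
    Finset.univ.image Sum.inr with hRdef
  have hRcard : R.card = s := by
    rw [hRdef, Finset.card_image_of_injective _ Sum.inr_injective, Finset.card_univ,
      Fintype.card_sigma]
    simp only [Fintype.card_fin]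
    rw [hs]
    rfl
  -- the injection
  set g : Fin (n + 1) → Fin (s + 1) × (Fin d → Fin (2 * D + 1)) := fun t =>
    (⟨(S (t : ℕ) ∩ R).card, by
        have h1 : (S (t : ℕ) ∩ R).card ≤ R.card :=
          Finset.card_le_card Finset.inter_subset_right
        omega⟩,
     fun c => ⟨((∑ i ∈ S (t : ℕ), x i) c + (D : ℤ)).toNat, by
        have h2 := hSnorm (t : ℕ) c
        omega⟩) with hgdef
  have hkey : ∀ t t' : Fin (n + 1), (t : ℕ) ≤ (t' : ℕ) → g t = g t' → t = t' := by
    intro t t' hle hg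
    have h1 : (S (t : ℕ) ∩ R).card = (S (t' : ℕ) ∩ R).card :=
      congrArg (fun p : Fin (s + 1) × (Fin d → Fin (2 * D + 1)) => p.1.1) hg
    have h2 : ∀ c, ((∑ i ∈ S (t : ℕ), x i) c + (D : ℤ)).toNat
        = ((∑ i ∈ S (t' : ℕ), x i) c + (D : ℤ)).toNat := fun c =>
      congrArg (fun p : Fin (s + 1) × (Fin d → Fin (2 * D + 1)) => (p.2 c).1) hg
    have hsub := hmono _ _ hle
    have hinter : S (t : ℕ) ∩ R = S (t' : ℕ) ∩ R :=
      Finset.eq_of_subset_of_card_le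
        (Finset.inter_subset_inter hsub (subset_refl R)) (le_of_eq h1.symm)
    have hsums : ∑ i ∈ S (t : ℕ), x i = ∑ i ∈ S (t' : ℕ), x i := by
      funext c
      have h3 := h2 c
      have h4 := hSnorm (t : ℕ) c
      have h5 := hSnorm (t' : ℕ) c
      omega
    by_contra hne
    have hlt : (t : ℕ) < (t' : ℕ) := lt_of_le_of_ne hle (fun h => hne (Fin.ext h))
    have hDsum : ∑ i ∈ S (t' : ℕ) \ S (t : ℕ), x i = 0 := by
      have h6 := Finset.sum_sdiff (f := x) hsub
      rw [← hsums] at h6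
      have h7 : (∑ i ∈ S (t' : ℕ) \ S (t : ℕ), x i) + ∑ i ∈ S (t : ℕ), x i
          = 0 + ∑ i ∈ S (t : ℕ), x i := by rw [zero_add]; exact h6
      exact add_right_cancel h7
    have hDne : (S (t' : ℕ) \ S (t : ℕ)).Nonempty := by
      rw [← Finset.card_pos, Finset.card_sdiff_of_subset hsub,
        hScard _ (by omega : (t' : ℕ) ≤ n), hScard _ (by omega : (t : ℕ) ≤ n)]
      omega
    have hDnotR : ∀ i ∈ S (t' : ℕ) \ S (t : ℕ), i ∉ R := by
      intro i hiD hiR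
      have hi1 : i ∈ S (t' : ℕ) ∩ R :=
        Finset.mem_inter.mpr ⟨(Finset.mem_sdiff.mp hiD).1, hiR⟩
      rw [← hinter] at hi1
      exact (Finset.mem_sdiff.mp hiD).2 (Finset.mem_inter.mp hi1).1
    set D' : Finset {j // j ∈ J₀} :=
      Finset.univ.filter (fun a => Sum.inl a ∈ S (t' : ℕ) \ S (t : ℕ)) with hD'def
    have hDD' : S (t' : ℕ) \ S (t : ℕ) = D'.image Sum.inl := by
      ext i
      constructor
      · intro hi
        rcases i with a | b
        · exact Finset.mem_image.mpr
            ⟨a, Finset.mem_filter.mpr ⟨Finset.mem_univ _, hi⟩, rfl⟩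
        · exact absurd
            (Finset.mem_image.mpr ⟨b, Finset.mem_univ _, rfl⟩ : Sum.inr b ∈ R)
            (hDnotR _ hi)
      · intro hi
        obtain ⟨a, ha, rfl⟩ := Finset.mem_image.mp hi
        exact (Finset.mem_filter.mp ha).2
    set J' : Finset (Fin k) := D'.image (fun a => a.1) with hJ'def
    have hJ'sub : J' ⊆ J₀ := by
      intro j hj
      obtain ⟨a, _, rfl⟩ := Finset.mem_image.mp hj
      exact a.2
    have hJ'ne : J'.Nonempty := by
      obtain ⟨i, hi⟩ := hDne
      rw [hDD'] at hi
      obtain ⟨a, ha, -⟩ := Finset.mem_image.mp hi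
      exact ⟨a.1, Finset.mem_image.mpr ⟨a, ha, rfl⟩⟩
    have hJ'sum : ∑ j ∈ J', f j = 0 := by
      have e1 : ∑ j ∈ J', f j = ∑ a ∈ D', f a.1 :=
        Finset.sum_image (fun a _ b _ h => Subtype.ext h)
      have e2 : ∑ a ∈ D', x (Sum.inl a) = ∑ i ∈ S (t' : ℕ) \ S (t : ℕ), x i := by
        rw [hDD']
        exact (Finset.sum_image (fun a _ b _ h => Sum.inl_injective h)).symm
      have e3 : ∑ a ∈ D', f a.1 = ∑ a ∈ D', x (Sum.inl a) :=
        Finset.sum_congr rfl fun a _ => (hL a).symm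
      rw [e1, e3, e2, hDsum]
    exact hzsf J' hJ'sub hJ'ne hJ'sum
  have hinj : Function.Injective g := by
    intro t t' h
    rcases le_total (t : ℕ) (t' : ℕ) with hle | hle
    · exact hkey t t' hle h
    · exact (hkey t' t hle h.symm).symm
  have hcount := Fintype.card_le_of_injective g hinj
  rw [Fintype.card_fin, Fintype.card_prod, Fintype.card_fun, Fintype.card_fin,
    Fintype.card_fin, Fintype.card_fin] at hcount
  -- hcount : n + 1 ≤ (s + 1) * (2 * D + 1) ^ d
  have h7 : 2 * D + 1 ≤ 3 * D := by omega
  have h8 : (2 * D + 1) ^ d ≤ (3 * D) ^ d := Nat.pow_le_pow_left h7 d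
  have h9 : s + 1 ≤ 2 * s := by omega
  have h10 : (s + 1) * (2 * D + 1) ^ d ≤ (2 * s) * (3 * D) ^ d :=
    Nat.mul_le_mul h9 h8
  have h11 : n + 1 ≤ 2 * s * (3 * D) ^ d := le_trans hcount h10
  have h12 : J₀.card ≤ n := by omega
  have h13 : J₀.card ≤ 2 * s * (3 * D) ^ d := by omega
  rw [show 3 * d * M = 3 * D from by rw [hD, mul_assoc]]
  exact h13
end
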